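/- arXiv:2502.07355 — 8 statements merged into one kernel-verified Lean document; each statement's English description precedes it below -/
import Mathlib

section
/- Let T be a Tanner graph of a BATS code. If two parameter pairs (A_1, B_1) and (A_2, B_2) are both valid for T, then the pair (A_1 ∪ A_2 ∪ A_e, B_1 ∪ B_2) is also valid for T, where A_e is the set of all VNs V not in A_1 ∪ A_2 that are neighbors of at least one B-CN in B_1 ∪ B_2 and have no B-CN neighbor outside B_1 ∪ B_2. -/
/-! Condition (C2) says that the deficiency `|S| - rk(C^{(S)})` of `S = Neib(C) ∩ A` is
positive. Each extra row raises the rank by at most one, so the deficiency is monotone in `S`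
and (C2) survives enlarging `A`. Condition (C3) for the union holds because a VN outside
`A₁ ∪ A₂` whose B-CN neighbours all lie in `B₁ ∪ B₂` has, by (C3) for `(A₁, B₁)`, at least one
such neighbour, and so belongs to `Ae`. -/

/-- The rank of a B-CN restricted to a subset `S` of the variable nodes:
`rk(C^{(S)}) = rank(G^{(S)} · H)` where `G^{(S)}` is the row-submatrix of `G`
formed by the rows indexed by `S`. -/
noncomputable def batchRank {F : Type*} [Field F] {K M Ni : ℕ}
    (G : Matrix (Fin K) (Fin M) F) (H : Matrix (Fin M) (Fin Ni) F)
    (S : Finset (Fin K)) : ℕ :=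
  ((G.submatrix (fun v : {x // x ∈ S} => v.1) id) * H).rank

/-- A parameter pair `(A, B)` of a set of VNs and a set of B-CNs is *valid*
for the Tanner graph of a BATS code given by neighbourhoods `Neib`,
generator matrices `G` and transfer matrices `H`:
(C1) every B-CN neighbour of every VN in `A` lies in `B`;
(C2) for every `C ∈ B`, `|Neib(C) ∩ A| > rk(C^{(Neib(C) ∩ A)})`;
(C3) every VN not in `A` has at least one B-CN neighbour outside `B`. -/
def ValidPair {F : Type*} [Field F] {K M n : ℕ} (N : Fin n → ℕ)
    (Neib : Fin n → Finset (Fin K))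
    (G : Fin n → Matrix (Fin K) (Fin M) F)
    (H : (i : Fin n) → Matrix (Fin M) (Fin (N i)) F)
    (A : Finset (Fin K)) (B : Finset (Fin n)) : Prop :=
  (∀ v ∈ A, ∀ i : Fin n, v ∈ Neib i → i ∈ B) ∧
  (∀ i ∈ B, batchRank (G i) (H i) (Neib i ∩ A) < (Neib i ∩ A).card) ∧
  (∀ v : Fin K, v ∉ A → ∃ i : Fin n, i ∉ B ∧ v ∈ Neib i)

open Finset

theorem Set.finrank_union_le {K V : Type*} [DivisionRing K] [AddCommGroup V] [Module K V]
    [FiniteDimensional K V] (s t : Set V) :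
    (s ∪ t).finrank K ≤ s.finrank K + t.finrank K := by
  rw [Set.finrank, Submodule.span_union]
  exact Submodule.finrank_add_le_finrank_add_finrank _ _

theorem Set.finrank_image_le_finrank_image_add_card {K V ι : Type*} [DivisionRing K]
    [AddCommGroup V] [Module K V] [FiniteDimensional K V] [DecidableEq ι]
    (f : ι → V) (s t : Finset ι) :
    (f '' t).finrank K ≤ (f '' s).finrank K + #(t \ s) := by
  classical
  have hcover : f '' t ⊆ f '' s ∪ f '' ↑(t \ s) := by
    rintro _ ⟨v, hv, rfl⟩
    by_cases hvs : v ∈ s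
    · exact .inl ⟨v, hvs, rfl⟩
    · exact .inr ⟨v, by simp [hv, hvs], rfl⟩
  calc (f '' t).finrank K ≤ (f '' s ∪ f '' ↑(t \ s)).finrank K := Set.finrank_mono hcover
    _ ≤ (f '' s).finrank K + (f '' ↑(t \ s)).finrank K := Set.finrank_union_le _ _
    _ ≤ (f '' s).finrank K + #(t \ s) := by
      gcongr
      rw [← coe_image]
      exact (finrank_span_finset_le_card _).trans card_image_le

theorem Matrix.rank_submatrix_rows_le {K ι n : Type*} [Field K] [Fintype n] [DecidableEq ι]
    (A : Matrix ι n K) (s t : Finset ι) :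
    (A.submatrix (fun v : t => v.1) id).rank ≤
      (A.submatrix (fun v : s => v.1) id).rank + #(t \ s) := by
  have hrows (u : Finset ι) : Set.range (A.submatrix (fun v : u => v.1) id).row = A '' u := by
    ext x
    constructor
    · rintro ⟨v, rfl⟩; exact ⟨v.1, v.2, rfl⟩
    · rintro ⟨v, hv, rfl⟩; exact ⟨⟨v, hv⟩, rfl⟩
  rw [Matrix.rank_eq_finrank_span_row, Matrix.rank_eq_finrank_span_row, hrows, hrows]
  exact Set.finrank_image_le_finrank_image_add_card A s t

section batchRank

variable {F : Type*} [Field F] {K M Ni : ℕ} (G : Matrix (Fin K) (Fin M) F)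
  (H : Matrix (Fin M) (Fin Ni) F)

theorem batchRank_eq_rank_submatrix_mul (S : Finset (Fin K)) :
    batchRank G H S = ((G * H).submatrix (fun v : S => v.1) id).rank := by
  rw [batchRank, Matrix.submatrix_mul _ _ _ _ _ Function.bijective_id, Matrix.submatrix_id_id]

theorem batchRank_lt_card_of_subset {s t : Finset (Fin K)} (hst : s ⊆ t)
    (hs : batchRank G H s < #s) : batchRank G H t < #t := by
  have hrank := (G * H).rank_submatrix_rows_le s t
  rw [← batchRank_eq_rank_submatrix_mul, ← batchRank_eq_rank_submatrix_mul] at hrank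
  have hcard := card_sdiff_add_card_eq_card hst
  omega

end batchRank

theorem validPair_union_general {F : Type*} [Field F] {K M n : ℕ}
    (N : Fin n → ℕ) (Neib : Fin n → Finset (Fin K))
    (G : Fin n → Matrix (Fin K) (Fin M) F)
    (H : (i : Fin n) → Matrix (Fin M) (Fin (N i)) F)
    (A₁ A₂ : Finset (Fin K)) (B₁ B₂ : Finset (Fin n))
    (h₁ : ValidPair N Neib G H A₁ B₁) (h₂ : ValidPair N Neib G H A₂ B₂)
    (Ae : Finset (Fin K))
    (hAe : ∀ v : Fin K, v ∈ Ae ↔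
      v ∉ A₁ ∪ A₂ ∧ (∃ i ∈ B₁ ∪ B₂, v ∈ Neib i) ∧
        ∀ i : Fin n, v ∈ Neib i → i ∈ B₁ ∪ B₂) :
    ValidPair N Neib G H (A₁ ∪ A₂ ∪ Ae) (B₁ ∪ B₂) := by
  obtain ⟨hB₁, hrk₁, hout₁⟩ := h₁
  obtain ⟨hB₂, hrk₂, -⟩ := h₂
  refine ⟨fun v hv i hvi => ?_, fun i hi => ?_, fun v hv => ?_⟩
  · rcases mem_union.1 hv with hv | hv
    · rcases mem_union.1 hv with hv | hv
      · exact mem_union_left _ (hB₁ v hv i hvi)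
      · exact mem_union_right _ (hB₂ v hv i hvi)
    · exact ((hAe v).1 hv).2.2 i hvi
  · rcases mem_union.1 hi with hi | hi
    · exact batchRank_lt_card_of_subset _ _
        (inter_subset_inter_left (subset_union_left.trans subset_union_left)) (hrk₁ i hi)
    · exact batchRank_lt_card_of_subset _ _
        (inter_subset_inter_left (subset_union_right.trans subset_union_left)) (hrk₂ i hi)
  · by_contra! hnone
    have hall : ∀ j, v ∈ Neib j → j ∈ B₁ ∪ B₂ := fun j hvj => by_contra fun hj => hnone j hj hvj
    have hv₁₂ : v ∉ A₁ ∪ A₂ := fun h => hv (mem_union_left _ h)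
    obtain ⟨i, -, hvi⟩ := hout₁ v fun h => hv₁₂ (mem_union_left _ h)
    exact hv (mem_union_right _ ((hAe v).2 ⟨hv₁₂, ⟨i, hall i hvi, hvi⟩, hall⟩))

/-- If `(A₁, B₁)` and `(A₂, B₂)` are both valid for the Tanner graph `T` of a
BATS code, then `(A₁ ∪ A₂ ∪ Ae, B₁ ∪ B₂)` is also valid for `T`, where `Ae` is
the set of all VNs not in `A₁ ∪ A₂` that are neighbours of at least one B-CN in
`B₁ ∪ B₂` and have no B-CN neighbour outside `B₁ ∪ B₂`. -/
theorem validPair_union {F : Type*} [Field F] {K M n : ℕ}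
    (hK : 0 < K) (hM : 0 < M) (hn : 0 < n)
    (N : Fin n → ℕ) (Neib : Fin n → Finset (Fin K))
    (G : Fin n → Matrix (Fin K) (Fin M) F)
    (H : (i : Fin n) → Matrix (Fin M) (Fin (N i)) F)
    (A₁ A₂ : Finset (Fin K)) (B₁ B₂ : Finset (Fin n))
    (h₁ : ValidPair N Neib G H A₁ B₁) (h₂ : ValidPair N Neib G H A₂ B₂)
    (Ae : Finset (Fin K))
    (hAe : ∀ v : Fin K, v ∈ Ae ↔
      v ∉ A₁ ∪ A₂ ∧ (∃ i ∈ B₁ ∪ B₂, v ∈ Neib i) ∧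
        ∀ i : Fin n, v ∈ Neib i → i ∈ B₁ ∪ B₂) :
    ValidPair N Neib G H (A₁ ∪ A₂ ∪ Ae) (B₁ ∪ B₂) :=
  validPair_union_general N Neib G H A₁ A₂ B₁ B₂ h₁ h₂ Ae hAe
end

section
/- The joint Tanner graph of an LDPC-BATS code (with l ≥ 1) cannot be reduced to the empty graph by joint BP (peeling) decoding — i.e., there exists no ordering v_1,…,v_K of all K VNs such that each v_t is decodable after removing v_1,…,v_{t−1} — if and only if there exist a non-empty set A of VNs, with a := |A|, and a (possibly empty) set B of B-CNs such that: (C1) every B-CN neighbor of every VN in A lies in B; (C2) for every C ∈ B, |Neib(C) ∩ A| > rk(C^{(Neib(C) ∩ A)}); (C4) the set X := {V ∉ A : every B-CN neighbor of V lies in B} satisfies |X| ≤ ⌊(K−a)·l/r⌋, and (A, X) is an extended stopping set with maximal stopping set A. -/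
/-- `S` is a stopping set of the LDPC graph with L-CN neighbourhoods `LNeib`:
every L-CN having a neighbour in `S` has at least two neighbours in `S`. -/
def IsStoppingSet {K L : ℕ} (LNeib : Fin L → Finset (Fin K))
    (S : Finset (Fin K)) : Prop :=
  ∀ j : Fin L, (LNeib j ∩ S).Nonempty → 2 ≤ (LNeib j ∩ S).card

/-- `(A, A')` is an extended stopping set with maximal stopping set `A`:
`A` is a stopping set of the LDPC graph and every stopping set of the LDPC
graph contained in `A ∪ A'` is contained in `A`. -/
def IsExtStoppingSet {K L : ℕ} (LNeib : Fin L → Finset (Fin K))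
    (A A' : Finset (Fin K)) : Prop :=
  IsStoppingSet LNeib A ∧
    ∀ S : Finset (Fin K), IsStoppingSet LNeib S → S ⊆ A ∪ A' → S ⊆ A

open Finset

section BatchRank

variable {F : Type*} [Field F] {K M Ni : ℕ} (G : Matrix (Fin K) (Fin M) F)
  (H : Matrix (Fin M) (Fin Ni) F)

theorem batchRank_le_card (S : Finset (Fin K)) : batchRank G H S ≤ #S := by
  simpa [batchRank] using
    Matrix.rank_le_card_height ((G.submatrix (fun v : {x // x ∈ S} => v.1) id) * H)

theorem batchRank_eq_card_iff (S : Finset (Fin K)) :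
    batchRank G H S = #S ↔ LinearIndependent F (fun v : S => (G * H) v) := by
  rw [linearIndependent_iff_card_eq_finrank_span, Fintype.card_coe, batchRank,
    Matrix.rank_eq_finrank_span_row, eq_comm]
  -- the rows of `G^{(S)} * H` are the rows of `G * H` indexed by `S`
  rfl

theorem batchRank_eq_card_of_subset {S T : Finset (Fin K)} (hST : S ⊆ T)
    (hT : batchRank G H T = #T) : batchRank G H S = #S := by
  rw [batchRank_eq_card_iff] at hT ⊢
  refine hT.comp (fun v : S => ⟨v.1, hST v.2⟩) fun v w h => Subtype.ext ?_
  simpa using congrArg Subtype.val h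

end BatchRank

section Peeling

variable {α : Type*} [DecidableEq α] {m : ℕ}

def peeled (f : Fin m → α) (t : Fin m) : Finset α :=
  (univ.filter (fun s => s < t)).image f

def IsPeelingSeq (D : Finset α → α → Prop) (f : Fin m → α) : Prop :=
  Function.Injective f ∧ ∀ t, D (peeled f t) (f t)

theorem mem_peeled_iff {f : Fin m → α} (hf : Function.Injective f) {s t : Fin m} :
    f s ∈ peeled f t ↔ s < t := by
  simp [peeled, hf.eq_iff]

theorem peeled_subset_image (f : Fin m → α) (t : Fin m) :
    peeled f t ⊆ univ.image f :=
  image_subset_image (filter_subset _ _)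

theorem peeled_snoc_castSucc (f : Fin m → α) (v : α) (t : Fin m) :
    peeled (Fin.snoc f v : Fin (m + 1) → α) t.castSucc = peeled f t := by
  ext w
  simp [peeled, Fin.exists_fin_succ', not_lt.2 (Fin.castSucc_lt_last t).le]

theorem peeled_snoc_last (f : Fin m → α) (v : α) :
    peeled (Fin.snoc f v : Fin (m + 1) → α) (Fin.last m) = univ.image f := by
  ext w
  simp [peeled, Fin.exists_fin_succ', Fin.castSucc_lt_last]

theorem IsPeelingSeq.snoc {D : Finset α → α → Prop} {f : Fin m → α}
    (hf : IsPeelingSeq D f) {v : α} (hv : v ∉ univ.image f) (hD : D (univ.image f) v) :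
    IsPeelingSeq D (Fin.snoc f v : Fin (m + 1) → α) := by
  refine ⟨Fin.snoc_injective_of_injective hf.1 (by simpa using hv), fun t => ?_⟩
  induction t using Fin.lastCases with
  | last => simpa [peeled_snoc_last] using hD
  | cast t => simpa [peeled_snoc_castSucc] using hf.2 t

theorem exists_isPeelingSeq_stuck [Fintype α] (D : Finset α → α → Prop) :
    ∃ (m : ℕ) (f : Fin m → α), IsPeelingSeq D f ∧
      ∀ v ∉ univ.image f, ¬ D (univ.image f) v := by
  by_contra! hext
  have hall : ∀ m, ∃ f : Fin m → α, IsPeelingSeq D f := by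
    intro m
    induction m with
    | zero => exact ⟨Fin.elim0, fun t => t.elim0, fun t => t.elim0⟩
    | succ m ih =>
      obtain ⟨f, hf⟩ := ih
      obtain ⟨v, hv, hD⟩ := hext m f hf
      exact ⟨_, hf.snoc hv hD⟩
  obtain ⟨f, hf⟩ := hall (Fintype.card α + 1)
  simpa using Fintype.card_le_of_injective f hf.1

theorem forall_apply_notMem_of_disjoint_peeled {f : Fin m → α} (S : Finset α)
    (h : ∀ t, Disjoint (peeled f t) S → f t ∉ S) (t : Fin m) : f t ∉ S := by
  induction t using WellFoundedLT.induction with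
  | _ t ih =>
    refine h t (disjoint_left.2 fun w hw => ?_)
    obtain ⟨s, hs, rfl⟩ := mem_image.1 hw
    exact ih s (mem_filter.1 hs).2

theorem IsPeelingSeq.exists_perm {K : ℕ} {D : Finset (Fin K) → Fin K → Prop}
    {f : Fin m → Fin K} (hf : IsPeelingSeq D f) (hP : univ.image f = univ) :
    ∃ σ : Equiv.Perm (Fin K), IsPeelingSeq D σ := by
  obtain rfl : m = K := by
    simpa [card_image_of_injective _ hf.1] using congrArg card hP
  have hsurj : Function.Surjective f := fun v => by
    have hv : v ∈ univ.image f := by rw [hP]; exact mem_univ v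
    simpa using hv
  exact ⟨Equiv.ofBijective f ⟨hf.1, hsurj⟩, hf⟩

section Checks

variable {ι : Type*} (N : ι → Finset α)

theorem eq_of_sdiff_peeled_eq_singleton {f : Fin m → α} (hf : Function.Injective f)
    {j : ι} {s t : Fin m} (hs : N j \ peeled f s = {f s}) (ht : N j \ peeled f t = {f t})
    (hst : s ≤ t) : s = t := by
  have hft : f t ∈ N j \ peeled f s := by
    refine mem_sdiff.2 ⟨(mem_sdiff.1 (ht ▸ mem_singleton_self (f t))).1, ?_⟩
    rw [mem_peeled_iff hf]
    exact hst.not_gt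
  rw [hs, mem_singleton] at hft
  exact (hf hft).symm

theorem card_le_card_filter_subset_image [Fintype ι] {f : Fin m → α}
    (hf : Function.Injective f) {X : Finset α} (hX : X ⊆ univ.image f)
    (hres : ∀ t, f t ∈ X → ∃ j, N j \ peeled f t = {f t}) :
    #X ≤ #{j | N j ⊆ univ.image f} := by
  refine card_le_card_of_forall_subsingleton
    (fun v j => ∃ t, f t = v ∧ N j \ peeled f t = {f t}) (fun v hv => ?_) ?_
  · obtain ⟨t, -, rfl⟩ := mem_image.1 (hX hv)
    obtain ⟨j, hj⟩ := hres t hv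
    refine ⟨j, mem_filter.2 ⟨mem_univ j, fun w hw => ?_⟩, t, rfl, hj⟩
    by_cases hwt : w ∈ peeled f t
    · exact peeled_subset_image f t hwt
    · have : w ∈ N j \ peeled f t := mem_sdiff.2 ⟨hw, hwt⟩
      rw [hj, mem_singleton] at this
      exact this ▸ mem_image_of_mem f (mem_univ t)
  · rintro j - v ⟨-, s, rfl, hs⟩ w ⟨-, t, rfl, ht⟩
    rcases le_total s t with hst | hts
    · rw [eq_of_sdiff_peeled_eq_singleton N hf hs ht hst]
    · rw [eq_of_sdiff_peeled_eq_singleton N hf ht hs hts]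

theorem card_filter_subset_mul_le [Fintype ι] {l r : ℕ} (hN : ∀ j, #(N j) = r)
    (hdeg : ∀ v, #{j | v ∈ N j} = l) (P : Finset α) : #{j | N j ⊆ P} * r ≤ #P * l := by
  let inc : α → ι → Prop := fun v j => v ∈ N j
  calc #{j | N j ⊆ P} * r = ∑ j ∈ {j | N j ⊆ P}, #(P.bipartiteBelow inc j) := by
        rw [card_eq_sum_ones, sum_mul]
        refine sum_congr rfl fun j hj => ?_
        rw [bipartiteBelow, filter_mem_eq_inter, inter_eq_right.2 (mem_filter.1 hj).2, hN, one_mul]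
    _ ≤ ∑ j, #(P.bipartiteBelow inc j) := sum_le_sum_of_subset (subset_univ _)
    _ = ∑ v ∈ P, #(univ.bipartiteAbove inc v) :=
        (sum_card_bipartiteAbove_eq_sum_card_bipartiteBelow inc).symm
    _ = #P * l := by simp [bipartiteAbove, inc, hdeg]

end Checks

end Peeling

section Decoding

variable {F : Type*} [Field F] {K M n L : ℕ} {N : Fin n → ℕ} (Neib : Fin n → Finset (Fin K))
  (G : Fin n → Matrix (Fin K) (Fin M) F) (H : (i : Fin n) → Matrix (Fin M) (Fin (N i)) F)
  (LNeib : Fin L → Finset (Fin K)) {m : ℕ}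

def Decodable (W : Finset (Fin K)) (v : Fin K) : Prop :=
  (∃ i, v ∈ Neib i \ W ∧ batchRank (G i) (H i) (Neib i \ W) = #(Neib i \ W)) ∨
    ∃ j, LNeib j \ W = {v}

/-- The set `X` of (C4). -/
def coveredOutside (A : Finset (Fin K)) (B : Finset (Fin n)) : Finset (Fin K) :=
  univ.filter fun v => v ∉ A ∧ ∀ i, v ∈ Neib i → i ∈ B

variable {Neib G H LNeib}

theorem batchRank_ne_card_of_disjoint {A W : Finset (Fin K)} {B : Finset (Fin n)}
    (hC2 : ∀ i ∈ B, batchRank (G i) (H i) (Neib i ∩ A) < #(Neib i ∩ A))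
    (hW : Disjoint W A) {i : Fin n} (hi : i ∈ B) :
    batchRank (G i) (H i) (Neib i \ W) ≠ #(Neib i \ W) := fun h =>
  (hC2 i hi).ne <| batchRank_eq_card_of_subset _ _
    (fun _ hx => mem_sdiff.2 ⟨(mem_inter.1 hx).1, disjoint_right.1 hW (mem_inter.1 hx).2⟩) h

theorem IsStoppingSet.sdiff_ne_singleton {S W : Finset (Fin K)} (hS : IsStoppingSet LNeib S)
    (hW : Disjoint W S) {v : Fin K} (hv : v ∈ S) (j : Fin L) : LNeib j \ W ≠ {v} := by
  intro hj
  have hsub : LNeib j ∩ S ⊆ {v} := hj ▸ fun x hx =>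
    mem_sdiff.2 ⟨(mem_inter.1 hx).1, disjoint_right.1 hW (mem_inter.1 hx).2⟩
  have hvj : v ∈ LNeib j := (mem_sdiff.1 (hj ▸ mem_singleton_self v)).1
  have := hS j ⟨v, mem_inter.2 ⟨hvj, hv⟩⟩
  have := card_le_card hsub
  simp only [card_singleton] at this
  omega

theorem not_decodable_of_disjoint {A W : Finset (Fin K)} {B : Finset (Fin n)}
    (hC1 : ∀ v ∈ A, ∀ i, v ∈ Neib i → i ∈ B)
    (hC2 : ∀ i ∈ B, batchRank (G i) (H i) (Neib i ∩ A) < #(Neib i ∩ A))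
    (hA : IsStoppingSet LNeib A) (hW : Disjoint W A) {v : Fin K} (hv : v ∈ A) :
    ¬ Decodable Neib G H LNeib W v := by
  rintro (⟨i, hvi, hrank⟩ | ⟨j, hj⟩)
  · exact batchRank_ne_card_of_disjoint hC2 hW (hC1 v hv i (mem_sdiff.1 hvi).1) hrank
  · exact hA.sdiff_ne_singleton hW hv j hj

theorem IsPeelingSeq.apply_notMem {A : Finset (Fin K)} {B : Finset (Fin n)}
    {f : Fin m → Fin K} (hf : IsPeelingSeq (Decodable Neib G H LNeib) f)
    (hC1 : ∀ v ∈ A, ∀ i, v ∈ Neib i → i ∈ B)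
    (hC2 : ∀ i ∈ B, batchRank (G i) (H i) (Neib i ∩ A) < #(Neib i ∩ A))
    (hA : IsStoppingSet LNeib A) (t : Fin m) : f t ∉ A :=
  forall_apply_notMem_of_disjoint_peeled A
    (fun t hW hmem => not_decodable_of_disjoint hC1 hC2 hA hW hmem (hf.2 t)) t

theorem batchRank_lt_of_stuck {P : Finset (Fin K)}
    (hstuck : ∀ v ∉ P, ¬ Decodable Neib G H LNeib P v) {i : Fin n}
    (hi : (Neib i ∩ Pᶜ).Nonempty) :
    batchRank (G i) (H i) (Neib i ∩ Pᶜ) < #(Neib i ∩ Pᶜ) := by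
  obtain ⟨v, hv⟩ := hi
  rw [← sdiff_eq_inter_compl] at hv ⊢
  exact (batchRank_le_card _ _ _).lt_of_ne fun h =>
    hstuck v (mem_sdiff.1 hv).2 (Or.inl ⟨i, hv, h⟩)

theorem isStoppingSet_compl_of_stuck {P : Finset (Fin K)}
    (hstuck : ∀ v ∉ P, ¬ Decodable Neib G H LNeib P v) : IsStoppingSet LNeib Pᶜ := by
  rintro j ⟨v, hv⟩
  by_contra! h
  have hj : LNeib j \ P = {v} := by
    rw [sdiff_eq_inter_compl, eq_singleton_iff_unique_mem]
    exact ⟨hv, fun w hw => card_le_one.1 (by omega) w hw v hv⟩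
  exact hstuck v (mem_compl.1 (mem_inter.1 hv).2) (Or.inr ⟨j, hj⟩)

theorem IsPeelingSeq.exists_sdiff_peeled_eq_singleton {A : Finset (Fin K)} {B : Finset (Fin n)}
    {f : Fin m → Fin K} (hf : IsPeelingSeq (Decodable Neib G H LNeib) f)
    (hC2 : ∀ i ∈ B, batchRank (G i) (H i) (Neib i ∩ A) < #(Neib i ∩ A))
    (hA : Disjoint (univ.image f) A) {t : Fin m} (hB : ∀ i, f t ∈ Neib i → i ∈ B) :
    ∃ j, LNeib j \ peeled f t = {f t} :=
  (hf.2 t).resolve_left fun ⟨i, hi, hrank⟩ =>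
    batchRank_ne_card_of_disjoint hC2 (hA.mono_left (peeled_subset_image f t))
      (hB i (mem_sdiff.1 hi).1) hrank

theorem exists_stoppingGraph_of_stuck {l r : ℕ} (hr : 0 < r)
    (hLdeg : ∀ j, #(LNeib j) = r) (hVdeg : ∀ v, #{j | v ∈ LNeib j} = l) {f : Fin m → Fin K} (hf : IsPeelingSeq (Decodable Neib G H LNeib) f)
    (hstuck : ∀ v ∉ univ.image f, ¬ Decodable Neib G H LNeib (univ.image f) v)
    (hP : univ.image f ≠ univ) :
    ∃ (A : Finset (Fin K)) (B : Finset (Fin n)),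
      A.Nonempty ∧
      (∀ v ∈ A, ∀ i, v ∈ Neib i → i ∈ B) ∧
      (∀ i ∈ B, batchRank (G i) (H i) (Neib i ∩ A) < #(Neib i ∩ A)) ∧
      #(coveredOutside Neib A B) ≤ (K - #A) * l / r ∧
      IsExtStoppingSet LNeib A (coveredOutside Neib A B) := by
  set P := univ.image f
  set B := univ.filter fun i => (Neib i ∩ Pᶜ).Nonempty
  have hC2 : ∀ i ∈ B, batchRank (G i) (H i) (Neib i ∩ Pᶜ) < #(Neib i ∩ Pᶜ) :=
    fun i hi => batchRank_lt_of_stuck hstuck (mem_filter.1 hi).2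
  have hXP : coveredOutside Neib Pᶜ B ⊆ P := fun v hv => by
    simpa using (mem_filter.1 hv).2.1
  have hres : ∀ t, f t ∈ coveredOutside Neib Pᶜ B → ∃ j, LNeib j \ peeled f t = {f t} :=
    fun t ht => hf.exists_sdiff_peeled_eq_singleton hC2 disjoint_compl_right (mem_filter.1 ht).2.2
  refine ⟨Pᶜ, B, ?_, fun v hv i hvi => mem_filter.2 ⟨mem_univ i, v, mem_inter.2 ⟨hvi, hv⟩⟩,
    hC2, ?_, isStoppingSet_compl_of_stuck hstuck, fun S hS hSsub v hvS => ?_⟩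
  · by_contra h
    rw [not_nonempty_iff_eq_empty, compl_eq_empty_iff] at h
    exact hP h
  · have hPK : #P ≤ K := by simpa using card_le_univ P
    rw [Nat.le_div_iff_mul_le hr, card_compl, Fintype.card_fin, Nat.sub_sub_self hPK]
    calc #(coveredOutside Neib Pᶜ B) * r ≤ #{j | LNeib j ⊆ P} * r :=
          Nat.mul_le_mul_right r (card_le_card_filter_subset_image LNeib hf.1 hXP hres)
      _ ≤ #P * l := card_filter_subset_mul_le LNeib hLdeg hVdeg P
  · by_contra hvP
    obtain ⟨t, -, rfl⟩ := mem_image.1 (not_not.1 (mem_compl.not.1 hvP))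
    refine forall_apply_notMem_of_disjoint_peeled S (fun t hW htS => ?_) t hvS
    have htX : f t ∈ coveredOutside Neib Pᶜ B :=
      (mem_union.1 (hSsub htS)).resolve_left (by simp [P])
    obtain ⟨j, hj⟩ := hres t htX
    exact hS.sdiff_ne_singleton hW htS j hj

end Decoding

theorem ldpc_bats_bp_fails_iff_stopping_graph_general {F : Type*} [Field F]
    {K M n l r : ℕ}
    (hr : 0 < r)
    (N : Fin n → ℕ) (Neib : Fin n → Finset (Fin K))
    (G : Fin n → Matrix (Fin K) (Fin M) F)
    (H : (i : Fin n) → Matrix (Fin M) (Fin (N i)) F)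
    (LNeib : Fin (K * l / r) → Finset (Fin K))
    (hLdeg : ∀ j : Fin (K * l / r), (LNeib j).card = r)
    (hVdeg : ∀ v : Fin K, (Finset.univ.filter (fun j => v ∈ LNeib j)).card = l) :
    (¬ ∃ σ : Equiv.Perm (Fin K), ∀ t : Fin K,
        (∃ i : Fin n,
          σ t ∈ Neib i \ (Finset.univ.filter (fun s => s < t)).image σ ∧
          batchRank (G i) (H i) (Neib i \ (Finset.univ.filter (fun s => s < t)).image σ)
            = (Neib i \ (Finset.univ.filter (fun s => s < t)).image σ).card) ∨
        (∃ j : Fin (K * l / r),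
          LNeib j \ (Finset.univ.filter (fun s => s < t)).image σ = {σ t})) ↔
    ∃ (A : Finset (Fin K)) (B : Finset (Fin n)),
      A.Nonempty ∧
      (∀ v ∈ A, ∀ i : Fin n, v ∈ Neib i → i ∈ B) ∧
      (∀ i ∈ B, batchRank (G i) (H i) (Neib i ∩ A) < (Neib i ∩ A).card) ∧
      (Finset.univ.filter
          (fun v : Fin K => v ∉ A ∧ ∀ i : Fin n, v ∈ Neib i → i ∈ B)).card
        ≤ (K - A.card) * l / r ∧
      IsExtStoppingSet LNeib A
        (Finset.univ.filter
          (fun v : Fin K => v ∉ A ∧ ∀ i : Fin n, v ∈ Neib i → i ∈ B)) := by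
  constructor
  · intro hno
    obtain ⟨m, f, hf, hstuck⟩ := exists_isPeelingSeq_stuck (Decodable Neib G H LNeib)
    refine exists_stoppingGraph_of_stuck hr hLdeg hVdeg hf hstuck fun hP => hno ?_
    obtain ⟨σ, hσ⟩ := hf.exists_perm hP
    exact ⟨σ, hσ.2⟩
  · rintro ⟨A, B, ⟨v, hv⟩, hC1, hC2, -, hA, -⟩ ⟨σ, hσ⟩
    exact IsPeelingSeq.apply_notMem ⟨σ.injective, hσ⟩ hC1 hC2 hA (σ.symm v) (by simpa using hv)

/-- The joint Tanner graph of an LDPC-BATS code (with `l ≥ 1`) cannot be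
reduced to the empty graph by joint BP (peeling) decoding — there is no
ordering `σ` of the `K` VNs such that each `σ t` is decodable (by a batch or
by a degree-one residual L-CN) after removing `σ s`, `s < t` — if and only if
there exist a non-empty set `A` of VNs and a (possibly empty) set `B` of
B-CNs satisfying (C1), (C2) and (C4). -/
theorem ldpc_bats_bp_fails_iff_stopping_graph {F : Type*} [Field F]
    {K M n l r : ℕ}
    (hK : 0 < K) (hM : 0 < M) (hn : 0 < n) (hl : 1 ≤ l) (hr : 0 < r)
    (hdvd : r ∣ K * l)
    (N : Fin n → ℕ) (Neib : Fin n → Finset (Fin K))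
    (G : Fin n → Matrix (Fin K) (Fin M) F)
    (H : (i : Fin n) → Matrix (Fin M) (Fin (N i)) F)
    (LNeib : Fin (K * l / r) → Finset (Fin K))
    (hLdeg : ∀ j : Fin (K * l / r), (LNeib j).card = r)
    (hVdeg : ∀ v : Fin K, (Finset.univ.filter (fun j => v ∈ LNeib j)).card = l) :
    (¬ ∃ σ : Equiv.Perm (Fin K), ∀ t : Fin K,
        (∃ i : Fin n,
          σ t ∈ Neib i \ (Finset.univ.filter (fun s => s < t)).image σ ∧
          batchRank (G i) (H i) (Neib i \ (Finset.univ.filter (fun s => s < t)).image σ)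
            = (Neib i \ (Finset.univ.filter (fun s => s < t)).image σ).card) ∨
        (∃ j : Fin (K * l / r),
          LNeib j \ (Finset.univ.filter (fun s => s < t)).image σ = {σ t})) ↔
    ∃ (A : Finset (Fin K)) (B : Finset (Fin n)),
      A.Nonempty ∧
      (∀ v ∈ A, ∀ i : Fin n, v ∈ Neib i → i ∈ B) ∧
      (∀ i ∈ B, batchRank (G i) (H i) (Neib i ∩ A) < (Neib i ∩ A).card) ∧
      (Finset.univ.filter
          (fun v : Fin K => v ∉ A ∧ ∀ i : Fin n, v ∈ Neib i → i ∈ B)).card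
        ≤ (K - A.card) * l / r ∧
      IsExtStoppingSet LNeib A
        (Finset.univ.filter
          (fun v : Fin K => v ∉ A ∧ ∀ i : Fin n, v ∈ Neib i → i ∈ B)) :=
  ldpc_bats_bp_fails_iff_stopping_graph_general hr N Neib G H LNeib hLdeg hVdeg
end

section
/- For every j ∈ {0,…,m}, the total weight of all s-tuples (A_1,…,A_s) of subsets of U whose union A_1 ∪ ⋯ ∪ A_s has exactly j elements equals C(m,j) · Σ_{k=0}^{j} (−1)^{j−k} C(j,k) (Σ_{d=0}^{k} β_d C(k,d)/C(m,d))^s. In particular, when (β_0,…,β_m) is a probability distribution and S_1,…,S_s are independent random subsets of U, each drawn by sampling a size d with probability β_d and then a uniformly random d-element subset, Pr{|S_1 ∪ ⋯ ∪ S_s| = j} equals this expression. -/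
/-!
Let `g B` be the total weight of the tuples whose union is exactly `B`. Summing `g` over the
subsets of `B` gives the total weight of the tuples with all `A i ⊆ B`, which factors as
`(∑ C ⊆ B, w C) ^ s = f(#B) ^ s` with `f k = ∑_d β_d C(k,d) / C(m,d)`. Möbius inversion on the
Boolean lattice recovers `g B` as an alternating sum of the `f(#C) ^ s`; this depends on `B` only
through `#B = j`, and there are `C(m,j)` such `B`.
-/

open Finset

namespace Finset

variable {α R : Type*} [DecidableEq α]

theorem sum_powerset_neg_one_pow_card_sub [CommRing R] (T : Finset α) :
    ∑ E ∈ T.powerset, (-1 : R) ^ (#T - #E) = if T = ∅ then 1 else 0 := by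
  have binomial : ∑ E ∈ T.powerset, (-1 : R) ^ (#T - #E) = (1 + -1) ^ #T := by
    rw [sum_powerset_apply_card (fun k ↦ (-1 : R) ^ (#T - k)), add_pow]
    simp only [one_pow, one_mul, nsmul_eq_mul, mul_comm]
  rw [binomial, add_neg_cancel, zero_pow_eq]
  exact if_congr card_eq_zero rfl rfl

theorem sum_Icc_neg_one_pow_card_sub [CommRing R] {D B : Finset α} (h : D ⊆ B) :
    ∑ C ∈ Icc D B, (-1 : R) ^ (#B - #C) = if D = B then 1 else 0 := by
  have disjoint : ∀ E ∈ (B \ D).powerset, Disjoint D E :=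
    fun E hE ↦ disjoint_sdiff.mono_right (mem_powerset.1 hE)
  have union_injOn : Set.InjOn (D ∪ ·) (B \ D).powerset := fun E hE F hF hEF ↦ by
    simpa [union_sdiff_cancel_left (disjoint E hE), union_sdiff_cancel_left (disjoint F hF)]
      using congrArg (· \ D) hEF
  have card_sub : ∀ E ∈ (B \ D).powerset, #B - #(D ∪ E) = #(B \ D) - #E := fun E hE ↦ by
    rw [card_union_of_disjoint (disjoint E hE), card_sdiff_of_subset h]
    omega
  rw [Icc_eq_image_powerset h, sum_image union_injOn,
    sum_congr rfl fun E hE ↦ by rw [card_sub E hE], sum_powerset_neg_one_pow_card_sub]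
  exact if_congr (sdiff_eq_empty_iff_subset.trans ⟨h.antisymm, Eq.ge⟩) rfl rfl

/-- Möbius inversion on the Boolean lattice of subsets of `B`. -/
theorem sum_powerset_neg_one_pow_card_sub_mul_sum_powerset [CommRing R] (g : Finset α → R)
    (B : Finset α) :
    ∑ C ∈ B.powerset, (-1 : R) ^ (#B - #C) * ∑ D ∈ C.powerset, g D = g B := by
  calc ∑ C ∈ B.powerset, (-1 : R) ^ (#B - #C) * ∑ D ∈ C.powerset, g D
      = ∑ C ∈ B.powerset, ∑ D ∈ C.powerset, (-1 : R) ^ (#B - #C) * g D := by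
        simp only [mul_sum]
    _ = ∑ D ∈ B.powerset, ∑ C ∈ Icc D B, (-1 : R) ^ (#B - #C) * g D :=
        sum_comm' fun C D ↦ by
          simp only [mem_powerset, mem_Icc]
          exact ⟨fun ⟨hCB, hDC⟩ ↦ ⟨⟨hDC, hCB⟩, hDC.trans hCB⟩, fun ⟨⟨hDC, hCB⟩, _⟩ ↦ ⟨hCB, hDC⟩⟩
    _ = ∑ D ∈ B.powerset, if D = B then g D else 0 :=
        sum_congr rfl fun D hD ↦ by
          rw [← sum_mul, sum_Icc_neg_one_pow_card_sub (mem_powerset.1 hD), ite_mul, one_mul,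
            zero_mul]
    _ = g B := by simp

theorem sum_powerset_sum_biUnion_eq_pow {ι : Type*} [Fintype α] [Fintype ι] [DecidableEq ι]
    [CommSemiring R] (w : Finset α → R) (B : Finset α) :
    ∑ C ∈ B.powerset, ∑ A : ι → Finset α with univ.biUnion A = C, ∏ i, w (A i)
      = (∑ C ∈ B.powerset, w C) ^ Fintype.card ι := by
  have tuples_below : univ.filter (fun A : ι → Finset α ↦ univ.biUnion A ∈ B.powerset)
      = Fintype.piFinset fun _ ↦ B.powerset := by
    ext A
    simp
  rw [sum_fiberwise_eq_sum_filter, tuples_below, ← prod_univ_sum, prod_const, card_univ]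

end Finset

theorem total_weight_union_card_general {α : Type*} [Fintype α] [DecidableEq α]
    (m : ℕ) (hm : Fintype.card α = m)
    (s : ℕ) (β : ℕ → ℝ)
    (j : ℕ) :
    ∑ A ∈ Finset.univ.filter
        (fun A : Fin s → Finset α => (Finset.univ.biUnion A).card = j),
      ∏ i : Fin s, β (A i).card / (m.choose (A i).card : ℝ)
    = (m.choose j : ℝ) *
        ∑ k ∈ Finset.range (j + 1),
          (-1 : ℝ) ^ (j - k) * (j.choose k : ℝ) *
            (∑ d ∈ Finset.range (k + 1),
              β d * (k.choose d : ℝ) / (m.choose d : ℝ)) ^ s := by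
  set w : Finset α → ℝ := fun C ↦ β #C / m.choose #C
  set f : ℕ → ℝ := fun k ↦ ∑ d ∈ range (k + 1), β d * k.choose d / m.choose d
  have sum_w : ∀ C : Finset α, ∑ D ∈ C.powerset, w D = f #C := fun C ↦ by
    rw [sum_powerset_apply_card fun n ↦ β n / m.choose n]
    exact sum_congr rfl fun d _ ↦ by rw [nsmul_eq_mul]; ring
  set g : Finset α → ℝ := fun B ↦ ∑ A : Fin s → Finset α with univ.biUnion A = B, ∏ i, w (A i)
  have union_eq : ∀ B : Finset α, #B = j →
      g B = ∑ k ∈ range (j + 1), (-1 : ℝ) ^ (j - k) * j.choose k * f k ^ s := by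
    intro B hB
    rw [← sum_powerset_neg_one_pow_card_sub_mul_sum_powerset g B]
    simp only [g, sum_powerset_sum_biUnion_eq_pow, sum_w, Fintype.card_fin]
    rw [sum_powerset_apply_card fun n ↦ (-1 : ℝ) ^ (#B - n) * f n ^ s, hB]
    exact sum_congr rfl fun k _ ↦ by rw [nsmul_eq_mul]; ring
  calc _ = ∑ B ∈ powersetCard j univ, g B := by
        simp only [g, w, sum_fiberwise_eq_sum_filter, mem_powersetCard_univ]
    _ = _ := by
        rw [sum_congr rfl fun B hB ↦ union_eq B (mem_powersetCard_univ.1 hB), sum_const,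
          card_powersetCard, card_univ, hm, nsmul_eq_mul]

/-- Assign to each subset `A` of an `m`-element set the weight
`β_{|A|} / C(m,|A|)` and to each `s`-tuple of subsets the product of the
weights. For every `j ∈ {0,…,m}`, the total weight of all `s`-tuples
`(A 1, …, A s)` of subsets whose union has exactly `j` elements equals
`C(m,j) · Σ_{k=0}^{j} (−1)^{j−k} C(j,k) (Σ_{d=0}^{k} β_d C(k,d)/C(m,d))^s`.
(When `β` is a probability distribution this is the probability that the
union of `s` such independent random subsets has cardinality `j`.) -/
theorem total_weight_union_card {α : Type*} [Fintype α] [DecidableEq α]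
    (m : ℕ) (hm : Fintype.card α = m)
    (s : ℕ) (hs : 1 ≤ s) (β : ℕ → ℝ)
    (j : ℕ) (hj : j ≤ m) :
    ∑ A ∈ Finset.univ.filter
        (fun A : Fin s → Finset α => (Finset.univ.biUnion A).card = j),
      ∏ i : Fin s, β (A i).card / (m.choose (A i).card : ℝ)
    = (m.choose j : ℝ) *
        ∑ k ∈ Finset.range (j + 1),
          (-1 : ℝ) ^ (j - k) * (j.choose k : ℝ) *
            (∑ d ∈ Finset.range (k + 1),
              β d * (k.choose d : ℝ) / (m.choose d : ℝ)) ^ s :=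
  total_weight_union_card_general m hm s β j
end

section
/- The matrix T is diagonalizable: T = U D U^{−1}, where D is the diagonal (m+1)×(m+1) matrix with D[i,i] = T[i,i] = Σ_{d=0}^{min{D,i}} β_d C(i,d)/C(m,d); U is the upper-triangular matrix with U[i,j] = C(m−i, j−i) for i ≤ j and 0 otherwise; and U^{−1} is the upper-triangular matrix with U^{−1}[i,j] = (−1)^{j−i} C(m−i, j−i) for i ≤ j and 0 otherwise. That is, U · U' = I and U · D · U' = T, where U'[i,j] = (−1)^{j−i} C(m−i, j−i) for i ≤ j and 0 otherwise. -/
/-!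
Since `C(m-i, k-i) C(m-k, j-k) = C(m-i, j-i) C(j-i, k-i)`, conjugating a diagonal matrix
`diag(f)` by `U` gives `(U diag(f) U')[i,j] = C(m-i, j-i) (Δ^(j-i) f)(i)`, with `Δ` the forward
difference. The claimed eigenvalues `f(k) = Σ_d β_d C(k,d) / C(m,d)` are a combination of the
binomials `C(·,d)`, for which `Δ^s C(·,d) = C(·,d-s)`; this reproduces the hypergeometric entries
of `T`. The constant `f = 1` gives `U U' = 1`.
-/

/-- The hypergeometric p.m.f.: `hyge k n i j = C(i,k)·C(n−i,j−k)/C(n,j)` when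
`max{0, i+j−n} ≤ k ≤ min{i,j}` (with `i+j−n` the truncated natural
subtraction, which equals `max{0, i+j−n}`), and `0` otherwise. -/
noncomputable def hyge (k n i j : ℕ) : ℝ :=
  if i + j - n ≤ k ∧ k ≤ min i j then
    (i.choose k : ℝ) * ((n - i).choose (j - k) : ℝ) / (n.choose j : ℝ)
  else 0

open Finset fwdDiff

section

variable {R : Type*} [CommRing R]

theorem fwdDiff_iter_natCast_choose_apply (d s i : ℕ) :
    Δ_[1] ^[s] (fun k : ℕ ↦ (k.choose d : R)) i = if s ≤ d then (i.choose (d - s) : R) else 0 := by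
  induction s generalizing d with
  | zero => simp
  | succ s ih =>
    rw [Function.iterate_succ_apply]
    cases d with
    | zero => simp [fwdDiff_iter_eq_sum_shift]
    | succ d =>
      have hΔ : Δ_[1] (fun k : ℕ ↦ (k.choose (d + 1) : R)) = fun k ↦ (k.choose d : R) := by
        ext k; simp [fwdDiff, Nat.choose_succ_succ']
      simp [hΔ, ih]

theorem fwdDiff_iter_sum_mul_natCast_choose_apply (S : Finset ℕ) (c : ℕ → R) (s i : ℕ) :
    Δ_[1] ^[s] (fun k : ℕ ↦ ∑ d ∈ S, c d * (k.choose d : R)) i =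
      ∑ d ∈ S, c d * if s ≤ d then (i.choose (d - s) : R) else 0 := by
  have hf : (fun k : ℕ ↦ ∑ d ∈ S, c d * (k.choose d : R)) =
      ∑ d ∈ S, c d • fun k : ℕ ↦ (k.choose d : R) := by
    ext k; simp [Finset.sum_apply]
  simp [hf, Finset.sum_apply, fwdDiff_iter_natCast_choose_apply]

def upperBinomial (m : ℕ) : Matrix (Fin (m + 1)) (Fin (m + 1)) R :=
  Matrix.of fun i j ↦ if i ≤ j then ((m - i.1).choose (j.1 - i.1) : R) else 0

def upperBinomialInv (m : ℕ) : Matrix (Fin (m + 1)) (Fin (m + 1)) R :=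
  Matrix.of fun i j ↦
    if i ≤ j then (-1 : R) ^ (j.1 - i.1) * ((m - i.1).choose (j.1 - i.1) : R) else 0

theorem upperBinomial_mul_diagonal_mul_upperBinomialInv_apply (m : ℕ) (f : ℕ → R)
    (i j : Fin (m + 1)) :
    (upperBinomial m * Matrix.diagonal (fun k : Fin (m + 1) ↦ f k) * upperBinomialInv m :
      Matrix (Fin (m + 1)) (Fin (m + 1)) R) i j =
      if i ≤ j then ((m - i.1).choose (j.1 - i.1) : R) * Δ_[1] ^[j.1 - i.1] f i else 0 := by
  set g : ℕ → R := fun k ↦ (if i.1 ≤ k then ((m - i.1).choose (k - i.1) : R) else 0) * f k *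
    (if k ≤ j.1 then (-1 : R) ^ (j.1 - k) * ((m - k).choose (j.1 - k) : R) else 0) with hg
  have hsum : (upperBinomial m * Matrix.diagonal (fun k : Fin (m + 1) ↦ f k) * upperBinomialInv m :
      Matrix (Fin (m + 1)) (Fin (m + 1)) R) i j = ∑ k ∈ range (m + 1), g k := by
    rw [Finset.sum_range, Matrix.mul_apply]
    simp only [Matrix.mul_diagonal]
    rfl
  have hg0 : ∀ k, ¬ (i.1 ≤ k ∧ k ≤ j.1) → g k = 0 := by
    intro k hk
    by_cases hik : i.1 ≤ k
    · simp [hg, show ¬ k ≤ j.1 by omega]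
    · simp [hg, hik]
  rw [hsum]
  split_ifs with hij
  · rw [Fin.le_def] at hij
    have hIco : ∑ k ∈ range (m + 1), g k = ∑ k ∈ Ico i.1 (j.1 + 1), g k := by
      refine (sum_subset (fun k hk ↦ ?_) fun k _ hk ↦ hg0 k ?_).symm
      · simp only [mem_Ico, mem_range] at hk ⊢; omega
      · simp only [mem_Ico] at hk; omega
    rw [hIco, sum_Ico_eq_sum_range, fwdDiff_iter_eq_sum_shift, mul_sum,
      show j.1 + 1 - i.1 = j.1 - i.1 + 1 by omega]
    refine sum_congr rfl fun t ht ↦ ?_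
    rw [mem_range] at ht
    have hchoose : ((m - i.1).choose (j.1 - i.1) : R) * ((j.1 - i.1).choose t : R) =
        ((m - i.1).choose t : R) * ((m - (i.1 + t)).choose (j.1 - (i.1 + t)) : R) := by
      rw [← Nat.sub_sub, ← Nat.sub_sub, ← Nat.cast_mul, ← Nat.cast_mul, Nat.choose_mul (by omega : t ≤ j.1 - i.1)]
    simp only [hg, if_pos (show i.1 ≤ i.1 + t by omega), if_pos (show i.1 + t ≤ j.1 by omega),
      Nat.add_sub_cancel_left, zsmul_eq_mul, smul_eq_mul, mul_one, Nat.sub_sub]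
    push_cast
    linear_combination -(-1 : R) ^ (j.1 - (i.1 + t)) * f (i.1 + t) * hchoose
  · exact sum_eq_zero fun k _ ↦ hg0 k (by rw [Fin.le_def] at hij; omega)

theorem upperBinomial_mul_upperBinomialInv (m : ℕ) :
    (upperBinomial m * upperBinomialInv m : Matrix (Fin (m + 1)) (Fin (m + 1)) R) = 1 := by
  have hone : Matrix.diagonal (fun k : Fin (m + 1) ↦ ((k : ℕ).choose 0 : R)) = 1 := by
    simp [Matrix.diagonal_one]
  ext i j
  have h := upperBinomial_mul_diagonal_mul_upperBinomialInv_apply m (fun k ↦ (k.choose 0 : R)) i j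
  rw [hone, Matrix.mul_one, fwdDiff_iter_natCast_choose_apply] at h
  rw [h, Matrix.one_apply]
  simp only [Fin.ext_iff, Fin.le_def]
  split_ifs <;> simp_all; omega

end

theorem hyge_eq_of_le {m i j d : ℕ} (hjm : j ≤ m) (hij : i ≤ j) (hd : j - i ≤ d) (hdj : d ≤ j) :
    hyge (i + d - j) m i d = (i.choose (d - (j - i)) * (m - i).choose (j - i)) / m.choose d := by
  rw [hyge, if_pos (by omega), show i + d - j = d - (j - i) by omega,
    show d - (d - (j - i)) = j - i by omega]

theorem hyge_eq_zero_of_lt {m i j : ℕ} (d : ℕ) (hji : j < i) : hyge (i + d - j) m i d = 0 :=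
  if_neg (by omega)

theorem sum_mul_hyge_eq (β : ℕ → ℝ) {m : ℕ} (D i : ℕ) {j : ℕ} (hjm : j ≤ m) :
    ∑ d ∈ Icc (j - i) (min D j), β d * hyge (i + d - j) m i d =
      if i ≤ j then ((m - i).choose (j - i) : ℝ) *
        ∑ d ∈ range (D + 1), β d / m.choose d * if j - i ≤ d then (i.choose (d - (j - i)) : ℝ) else 0
      else 0 := by
  split_ifs with hij
  · rw [mul_sum]
    refine sum_subset_zero_on_sdiff (fun d hd ↦ ?_) (fun d hd ↦ ?_) (fun d hd ↦ ?_)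
    · simp only [mem_Icc, mem_range] at hd ⊢; omega
    · simp only [mem_sdiff, mem_Icc, mem_range] at hd
      by_cases hjd : j - i ≤ d
      · rw [if_pos hjd, Nat.choose_eq_zero_of_lt (by omega : i < d - (j - i))]; simp
      · rw [if_neg hjd]; simp
    · simp only [mem_Icc] at hd
      rw [hyge_eq_of_le hjm hij hd.1 (by omega), if_pos hd.1]
      ring
  · exact sum_eq_zero fun d _ ↦ by rw [hyge_eq_zero_of_lt d (by omega), mul_zero]

theorem transition_matrix_diagonalizable_general (m D : ℕ)
    (β : ℕ → ℝ)
    (T U U' Λ : Matrix (Fin (m + 1)) (Fin (m + 1)) ℝ)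
    (hT : ∀ i j : Fin (m + 1), T i j =
      ∑ d ∈ Finset.Icc (j.1 - i.1) (min D j.1),
        β d * hyge (i.1 + d - j.1) m i.1 d)
    (hU : ∀ i j : Fin (m + 1), U i j =
      if i ≤ j then ((m - i.1).choose (j.1 - i.1) : ℝ) else 0)
    (hU' : ∀ i j : Fin (m + 1), U' i j =
      if i ≤ j then (-1 : ℝ) ^ (j.1 - i.1) * ((m - i.1).choose (j.1 - i.1) : ℝ)
      else 0)
    (hΛ : ∀ i j : Fin (m + 1), Λ i j =
      if i = j then
        ∑ d ∈ Finset.range (min D i.1 + 1),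
          β d * (i.1.choose d : ℝ) / (m.choose d : ℝ)
      else 0) :
    (∀ i : Fin (m + 1), Λ i i = T i i) ∧ U * U' = 1 ∧ U * Λ * U' = T := by
  set f : ℕ → ℝ := fun k ↦ ∑ d ∈ range (D + 1), β d / m.choose d * k.choose d
  have hU : U = upperBinomial m := Matrix.ext hU
  have hU' : U' = upperBinomialInv m := Matrix.ext hU'
  have hΛ : Λ = Matrix.diagonal fun k : Fin (m + 1) ↦ f k := by
    ext i j
    rw [hΛ, Matrix.diagonal_apply]
    refine if_congr Iff.rfl ((sum_subset (fun d hd ↦ ?_) fun d hd hdi ↦ ?_).trans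
      (sum_congr rfl fun d _ ↦ by ring)) rfl
    · simp only [mem_range] at hd ⊢; omega
    · simp only [mem_range] at hd hdi
      rw [Nat.choose_eq_zero_of_lt (by omega)]; simp
  have hT : ∀ i j, T i j = (U * Λ * U') i j := by
    intro i j
    rw [hT, sum_mul_hyge_eq β D i j.is_le, hU, hU', hΛ,
      upperBinomial_mul_diagonal_mul_upperBinomialInv_apply,
      fwdDiff_iter_sum_mul_natCast_choose_apply]
    simp only [Fin.le_def]
  refine ⟨fun i ↦ ?_, hU ▸ hU' ▸ upperBinomial_mul_upperBinomialInv m,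
    Matrix.ext fun i j ↦ (hT i j).symm⟩
  rw [hT, hU, hU', hΛ, upperBinomial_mul_diagonal_mul_upperBinomialInv_apply]
  simp

/-- The matrix `T` with `T[i,j] = Σ_{d=j−i}^{min{D,j}} β_d hyge(i+d−j;m,i,d)`
is diagonalizable: `T = U · Λ · U⁻¹` where `Λ` is diagonal with
`Λ[i,i] = T[i,i] = Σ_{d=0}^{min{D,i}} β_d C(i,d)/C(m,d)`, `U` is upper
triangular with `U[i,j] = C(m−i, j−i)` for `i ≤ j`, and `U⁻¹ = U'` is upper
triangular with `U'[i,j] = (−1)^{j−i} C(m−i, j−i)` for `i ≤ j`; that is,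
`U · U' = 1` and `U · Λ · U' = T`. -/
theorem transition_matrix_diagonalizable (m D : ℕ) (hD : D ≤ m)
    (β : ℕ → ℝ) (hβ : ∀ d ≤ D, 0 ≤ β d)
    (hsum : ∑ d ∈ Finset.range (D + 1), β d = 1)
    (T U U' Λ : Matrix (Fin (m + 1)) (Fin (m + 1)) ℝ)
    (hT : ∀ i j : Fin (m + 1), T i j =
      ∑ d ∈ Finset.Icc (j.1 - i.1) (min D j.1),
        β d * hyge (i.1 + d - j.1) m i.1 d)
    (hU : ∀ i j : Fin (m + 1), U i j =
      if i ≤ j then ((m - i.1).choose (j.1 - i.1) : ℝ) else 0)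
    (hU' : ∀ i j : Fin (m + 1), U' i j =
      if i ≤ j then (-1 : ℝ) ^ (j.1 - i.1) * ((m - i.1).choose (j.1 - i.1) : ℝ)
      else 0)
    (hΛ : ∀ i j : Fin (m + 1), Λ i j =
      if i = j then
        ∑ d ∈ Finset.range (min D i.1 + 1),
          β d * (i.1.choose d : ℝ) / (m.choose d : ℝ)
      else 0) :
    (∀ i : Fin (m + 1), Λ i i = T i i) ∧ U * U' = 1 ∧ U * Λ * U' = T :=
  transition_matrix_diagonalizable_general m D β T U U' Λ hT hU hU' hΛ
end

section
/- For every integer s ≥ 1 and all indices i, j ∈ {0,…,m}, the (i,j) entry of the s-th power of T satisfies (T^s)[i,j] = C(m−i, j−i) · Σ_{k=i}^{j} (−1)^{j−k} C(j−i, k−i) (Σ_{d=0}^{min{D,k}} β_d C(k,d)/C(m,d))^s (in particular (T^s)[i,j] = 0 when j < i). -/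
/-!
Let `P i k = C(m-i, k-i)`. Each column of `P` is an eigenvector of `T`, with eigenvalue
`λ k = Σ_d β d C(k,d)/C(m,d)`: for a single draw of `d` positions this is the trinomial
identity `C(m-i, r) C(m-i-r, k-i-r) = C(m-i, k-i) C(k-i, r)` followed by Vandermonde's
convolution. The inverse of `P` is `((-1)^(j-k) C(m-k, j-k))`, by the same trinomial identity and
`Σ_r (-1)^(n-r) C(n,r) = 0` for `n > 0`. Hence `T^s = P diag(λ^s) P⁻¹`, and expanding this
product gives the formula.
-/

open Finset Matrix

theorem Nat.choose_mul_choose_sub_comm (a r t : ℕ) :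
    a.choose r * (a - r).choose t = a.choose t * (a - t).choose r := by
  have hr := Nat.choose_mul (n := a) (k := r + t) (Nat.le_add_right r t)
  have ht := Nat.choose_mul (n := a) (k := r + t) (Nat.le_add_left t r)
  rw [Nat.add_sub_cancel_left] at hr
  rw [Nat.add_sub_cancel] at ht
  rw [← hr, ← ht, Nat.choose_symm_add]

theorem Nat.choose_sub_mul_choose_sub {m i k j : ℕ} (hik : i ≤ k) (hkj : k ≤ j)
    (hjm : j ≤ m) :
    (m - i).choose (m - k) * (m - k).choose (m - j) =
      (m - i).choose (j - i) * (j - i).choose (k - i) := by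
  rw [Nat.choose_mul (by omega),
    Nat.choose_symm_of_eq_add (show m - i = (m - j) + (j - i) by omega),
    show m - i - (m - j) = j - i by omega, show m - k - (m - j) = j - k by omega,
    Nat.choose_symm_of_eq_add (show j - i = (j - k) + (k - i) by omega)]

theorem sum_Icc_neg_one_pow_mul_choose (i j : ℕ) :
    ∑ k ∈ Icc i j, (-1 : ℝ) ^ (j - k) * ((j - i).choose (k - i) : ℝ) =
      if i = j then 1 else 0 := by
  rcases lt_or_ge j i with hji | hij
  · rw [Icc_eq_empty_of_lt hji, sum_empty, if_neg hji.ne']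
  have hbinom := add_pow (1 : ℝ) (-1) (j - i)
  rw [add_neg_cancel, zero_pow_eq] at hbinom
  rw [← Ico_add_one_right_eq_Icc, sum_Ico_eq_sum_range, show j + 1 - i = j - i + 1 by omega]
  simp only [one_pow, one_mul] at hbinom
  rw [sum_congr rfl fun r _ => by
    rw [show j - (i + r) = j - i - r by omega, Nat.add_sub_cancel_left], ← hbinom]
  exact if_congr (by omega) rfl rfl

theorem hyge_eq_zero_of_lt_s9 {k n i j : ℕ} (h : min i j < k) : hyge k n i j = 0 :=
  if_neg fun hk => (h.trans_le hk.2).false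

theorem hyge_of_le {k n i j : ℕ} (hi : i ≤ n) (hk : k ≤ j) :
    hyge k n i j = (i.choose k : ℝ) * ((n - i).choose (j - k) : ℝ) / (n.choose j : ℝ) := by
  unfold hyge
  split_ifs with hkn
  · rfl
  rcases lt_or_ge i k with hik | hki
  · rw [Nat.choose_eq_zero_of_lt hik, Nat.cast_zero, zero_mul, zero_div]
  · have hlt : k < i + j - n := by
      by_contra hle
      exact hkn ⟨by omega, by omega⟩
    rw [Nat.choose_eq_zero_of_lt (n := n - i) (by omega), Nat.cast_zero, mul_zero, zero_div]

/-- Probability of moving from `i` to `j` marked positions out of `m` when `d` positions are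
drawn and marked: `j - i` of the drawn positions were unmarked. -/
noncomputable def sampleTransition (m d i j : ℕ) : ℝ :=
  if j - i ≤ d then hyge (i + d - j) m i d else 0

theorem sampleTransition_eq_zero_of_lt {m d i j : ℕ} (h : j < i) :
    sampleTransition m d i j = 0 := by
  rw [sampleTransition, if_pos (by omega), hyge_eq_zero_of_lt_s9 (by omega)]

theorem sampleTransition_eq_zero_of_add_lt {m d i j : ℕ} (h : i + d < j) :
    sampleTransition m d i j = 0 :=
  if_neg (by omega)

theorem sampleTransition_of_le {m d i j : ℕ} (hi : i ≤ m) (hij : i ≤ j) (hjd : j ≤ i + d) :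
    sampleTransition m d i j =
      (i.choose (i + d - j) : ℝ) * ((m - i).choose (j - i) : ℝ) / (m.choose d : ℝ) := by
  rw [sampleTransition, if_pos (by omega), hyge_of_le hi (by omega),
    show d - (i + d - j) = j - i by omega]

theorem sum_hyge_eq_sum_sampleTransition (m D : ℕ) (β : ℕ → ℝ) (i j : ℕ) :
    ∑ d ∈ Icc (j - i) (min D j), β d * hyge (i + d - j) m i d =
      ∑ d ∈ range (D + 1), β d * sampleTransition m d i j := by
  refine sum_congr_of_eq_on_inter (fun d hd hd' => ?_) (fun d hd hd' => ?_) (fun d hd _ => ?_)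
  · simp only [mem_Icc, mem_range] at hd hd'
    omega
  · simp only [mem_Icc, mem_range, not_and_or, not_le] at hd hd'
    rcases hd' with hd' | hd'
    · rw [sampleTransition, if_neg (by omega), mul_zero]
    · rw [sampleTransition, hyge_eq_zero_of_lt_s9 (by omega), ite_self, mul_zero]
  · rw [mem_Icc] at hd
    rw [sampleTransition, if_pos hd.1]

/-- Probabilistically: a `k`-set containing the marked positions still contains them after the
draw iff the draw lies inside it, which has probability `C(k,d)/C(m,d)`. -/
theorem sum_sampleTransition_mul_choose (m d : ℕ) {i k : ℕ} (hi : i ≤ m) (hk : k ≤ m) :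
    ∑ j ∈ range (m + 1), sampleTransition m d i j * ((m - j).choose (m - k) : ℝ) =
      ((m - i).choose (m - k) : ℝ) * ((k.choose d : ℝ) / (m.choose d : ℝ)) := by
  have hshift : ∑ j ∈ range (m + 1), sampleTransition m d i j * ((m - j).choose (m - k) : ℝ) =
      ∑ r ∈ range (d + 1),
        sampleTransition m d i (i + r) * ((m - (i + r)).choose (m - k) : ℝ) := by
    have hIco := sum_Ico_eq_sum_range
      (fun j => sampleTransition m d i j * ((m - j).choose (m - k) : ℝ)) i (i + d + 1)
    rw [show i + d + 1 - i = d + 1 by omega] at hIco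
    rw [← hIco]
    refine sum_congr_of_eq_on_inter (fun j hj hj' => ?_) (fun j hj hj' => ?_) (fun _ _ _ => rfl)
    · simp only [mem_Ico, not_and_or, not_le, not_lt] at hj'
      rcases hj' with hj' | hj'
      · rw [sampleTransition_eq_zero_of_lt hj', zero_mul]
      · rw [sampleTransition_eq_zero_of_add_lt (by omega), zero_mul]
    · simp only [mem_Ico, mem_range] at hj hj'
      rw [sampleTransition_of_le hi hj.1 (by omega),
        Nat.choose_eq_zero_of_lt (n := m - i) (by omega)]
      simp
  set t := m - i - (m - k) with ht
  have htrinom (r : ℕ) : (m - i).choose r * (m - i - r).choose (m - k) * i.choose (d - r) =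
      (m - i).choose (m - k) * (t.choose r * i.choose (d - r)) := by
    rw [Nat.choose_mul_choose_sub_comm, mul_assoc]
  have hvandermonde :
      ∑ r ∈ range (d + 1), t.choose r * i.choose (d - r) = (t + i).choose d := by
    rw [Nat.add_choose_eq,
      Nat.sum_antidiagonal_eq_sum_range_succ (fun a b => t.choose a * i.choose b)]
  have hchoose :
      (m - i).choose (m - k) * (t + i).choose d = (m - i).choose (m - k) * k.choose d := by
    rcases le_or_gt i k with hik | hki
    · rw [show t + i = k by omega]
    · rw [Nat.choose_eq_zero_of_lt (by omega), zero_mul, zero_mul]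
  calc _ = ∑ r ∈ range (d + 1), (((m - i).choose r * (m - i - r).choose (m - k) *
          i.choose (d - r) : ℕ) : ℝ) / (m.choose d : ℝ) := by
        rw [hshift]
        refine sum_congr rfl fun r hr => ?_
        rw [sampleTransition_of_le hi (by omega) (by simp only [mem_range] at hr; omega),
          show i + d - (i + r) = d - r by omega, Nat.add_sub_cancel_left,
          show m - (i + r) = m - i - r by omega]
        push_cast
        ring
    _ = (((m - i).choose (m - k) * k.choose d : ℕ) : ℝ) / (m.choose d : ℝ) := by
        simp_rw [htrinom, ← sum_div, ← Nat.cast_sum, ← mul_sum, hvandermonde, hchoose]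
    _ = _ := by push_cast; ring

noncomputable def transitionEigenvalue (m D : ℕ) (β : ℕ → ℝ) (k : ℕ) : ℝ :=
  ∑ d ∈ range (min D k + 1), β d * (k.choose d : ℝ) / (m.choose d : ℝ)

theorem transitionEigenvalue_eq_sum_range (m D : ℕ) (β : ℕ → ℝ) (k : ℕ) :
    transitionEigenvalue m D β k =
      ∑ d ∈ range (D + 1), β d * ((k.choose d : ℝ) / (m.choose d : ℝ)) := by
  refine sum_subset (range_subset_range.mpr (by omega)) (fun d hd hd' => ?_) |>.trans
    (sum_congr rfl fun d _ => mul_div_assoc _ _ _)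
  simp only [mem_range] at hd hd'
  rw [Nat.choose_eq_zero_of_lt (by omega), Nat.cast_zero, mul_zero, zero_div]

/-- `binomMatrix m i k = C(m-i, k-i)`, written so that it vanishes for `k < i`. -/
noncomputable def binomMatrix (m : ℕ) : Matrix (Fin (m + 1)) (Fin (m + 1)) ℝ :=
  of fun i k => ((m - i.1).choose (m - k.1) : ℝ)

noncomputable def binomInvMatrix (m : ℕ) : Matrix (Fin (m + 1)) (Fin (m + 1)) ℝ :=
  of fun k j => (-1 : ℝ) ^ (j.1 - k.1) * ((m - k.1).choose (m - j.1) : ℝ)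

theorem binomMatrix_mul_diagonal_mul_binomInvMatrix_apply (m : ℕ) (f : ℕ → ℝ)
    (i j : Fin (m + 1)) :
    (binomMatrix m * diagonal (fun k : Fin (m + 1) => f k) * binomInvMatrix m) i j =
      ((m - i.1).choose (j.1 - i.1) : ℝ) *
        ∑ k ∈ Icc i.1 j.1, (-1 : ℝ) ^ (j.1 - k) * ((j.1 - i.1).choose (k - i.1) : ℝ) * f k := by
  rw [mul_apply]
  simp only [mul_diagonal, binomMatrix, binomInvMatrix, of_apply]
  rw [Fin.sum_univ_eq_sum_range (fun k => ((m - i.1).choose (m - k) : ℝ) * f k *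
    ((-1 : ℝ) ^ (j.1 - k) * ((m - k).choose (m - j.1) : ℝ))) (m + 1), mul_sum]
  refine (sum_subset (fun k hk => ?_) fun k hk hk' => ?_).symm.trans
    (sum_congr rfl fun k hk => ?_)
  · simp only [mem_Icc, mem_range] at hk ⊢
    omega
  · simp only [mem_Icc, mem_range, not_and_or, not_le] at hk hk'
    rcases hk' with hk' | hk'
    · rw [Nat.choose_eq_zero_of_lt (by omega), Nat.cast_zero, zero_mul, zero_mul]
    · rw [Nat.choose_eq_zero_of_lt (n := m - k) (by omega), Nat.cast_zero, mul_zero, mul_zero]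
  · rw [mem_Icc] at hk
    have h := Nat.choose_sub_mul_choose_sub (m := m) hk.1 hk.2 (Nat.lt_succ_iff.mp j.2)
    have h' : ((m - i.1).choose (m - k) : ℝ) * ((m - k).choose (m - j.1) : ℝ) =
        ((m - i.1).choose (j.1 - i.1) : ℝ) * ((j.1 - i.1).choose (k - i.1) : ℝ) := by
      exact_mod_cast h
    linear_combination (-1 : ℝ) ^ (j.1 - k) * f k * h'

theorem binomMatrix_mul_binomInvMatrix (m : ℕ) : binomMatrix m * binomInvMatrix m = 1 := by
  ext i j
  have h := binomMatrix_mul_diagonal_mul_binomInvMatrix_apply m (fun _ => 1) i j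
  simp only [diagonal_one, mul_one, sum_Icc_neg_one_pow_mul_choose] at h
  rw [h, one_apply]
  rcases eq_or_ne i j with rfl | hij
  · simp
  · rw [if_neg (Fin.val_injective.ne hij), if_neg hij, mul_zero]

theorem transition_mul_binomMatrix {m D : ℕ} {β : ℕ → ℝ}
    {T : Matrix (Fin (m + 1)) (Fin (m + 1)) ℝ} (hT : ∀ i j : Fin (m + 1), T i j =
      ∑ d ∈ Icc (j.1 - i.1) (min D j.1), β d * hyge (i.1 + d - j.1) m i.1 d) :
    T * binomMatrix m =
      binomMatrix m * diagonal (fun k : Fin (m + 1) => transitionEigenvalue m D β k) := by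
  ext i k
  rw [mul_apply, mul_diagonal]
  simp only [hT, sum_hyge_eq_sum_sampleTransition, binomMatrix, of_apply, sum_mul]
  rw [Fin.sum_univ_eq_sum_range (fun j => ∑ d ∈ range (D + 1), β d * sampleTransition m d i j *
    ((m - j).choose (m - k) : ℝ)) (m + 1), sum_comm, transitionEigenvalue_eq_sum_range, mul_sum]
  refine sum_congr rfl fun d _ => ?_
  simp only [mul_assoc, ← mul_sum]
  rw [sum_sampleTransition_mul_choose m d (Nat.lt_succ_iff.mp i.2) (Nat.lt_succ_iff.mp k.2),
    mul_left_comm]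

theorem transition_matrix_pow_entry_general (m D : ℕ)
    (β : ℕ → ℝ)
    (T : Matrix (Fin (m + 1)) (Fin (m + 1)) ℝ)
    (hT : ∀ i j : Fin (m + 1), T i j =
      ∑ d ∈ Finset.Icc (j.1 - i.1) (min D j.1),
        β d * hyge (i.1 + d - j.1) m i.1 d)
    (s : ℕ) (i j : Fin (m + 1)) :
    (T ^ s) i j = ((m - i.1).choose (j.1 - i.1) : ℝ) *
      ∑ k ∈ Finset.Icc i.1 j.1,
        (-1 : ℝ) ^ (j.1 - k) * ((j.1 - i.1).choose (k - i.1) : ℝ) *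
          (∑ d ∈ Finset.range (min D k + 1),
            β d * (k.choose d : ℝ) / (m.choose d : ℝ)) ^ s := by
  set P := binomMatrix m
  set L := diagonal fun k : Fin (m + 1) => transitionEigenvalue m D β k
  have hconj : SemiconjBy P L T := (transition_mul_binomMatrix hT).symm
  have hpow : T ^ s = P * L ^ s * binomInvMatrix m := by
    rw [(hconj.pow_right s).eq, Matrix.mul_assoc, binomMatrix_mul_binomInvMatrix, Matrix.mul_one]
  rw [hpow, diagonal_pow]
  exact binomMatrix_mul_diagonal_mul_binomInvMatrix_apply m
    (fun k => transitionEigenvalue m D β k ^ s) i j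

/-- For the matrix `T` with
`T[i,j] = Σ_{d=j−i}^{min{D,j}} β_d hyge(i+d−j;m,i,d)`, every `s ≥ 1` and all
`i, j ∈ {0,…,m}`, the `(i,j)` entry of the `s`-th power satisfies
`(T^s)[i,j] = C(m−i, j−i) · Σ_{k=i}^{j} (−1)^{j−k} C(j−i, k−i)
(Σ_{d=0}^{min{D,k}} β_d C(k,d)/C(m,d))^s`
(in particular `(T^s)[i,j] = 0` when `j < i`, the sum being empty). -/
theorem transition_matrix_pow_entry (m D : ℕ) (hD : D ≤ m)
    (β : ℕ → ℝ) (hβ : ∀ d ≤ D, 0 ≤ β d)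
    (hsum : ∑ d ∈ Finset.range (D + 1), β d = 1)
    (T : Matrix (Fin (m + 1)) (Fin (m + 1)) ℝ)
    (hT : ∀ i j : Fin (m + 1), T i j =
      ∑ d ∈ Finset.Icc (j.1 - i.1) (min D j.1),
        β d * hyge (i.1 + d - j.1) m i.1 d)
    (s : ℕ) (hs : 1 ≤ s) (i j : Fin (m + 1)) :
    (T ^ s) i j = ((m - i.1).choose (j.1 - i.1) : ℝ) *
      ∑ k ∈ Finset.Icc i.1 j.1,
        (-1 : ℝ) ^ (j.1 - k) * ((j.1 - i.1).choose (k - i.1) : ℝ) *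
          (∑ d ∈ Finset.range (min D k + 1),
            β d * (k.choose d : ℝ) / (m.choose d : ℝ)) ^ s :=
  transition_matrix_pow_entry_general m D β T hT s i j
end

section
/- Let F be a finite field with q elements, let M, N, d be nonnegative integers, and let H be a fixed M×N matrix over F with rank(H) = k. Then for every nonnegative integer r ≤ min{d,k}, the number of d×M matrices G over F with rank(G·H) = r equals q^{dM} · ζ_r^{d,k}; equivalently, if G is a uniformly random d×M matrix over F, then Pr{rank(G·H) = r} = ζ_r^{d,k}, the same as the rank distribution of a uniformly random d×k matrix over F. -/
/-- `ζ_r^m = ∏_{i=0}^{r−1} (1 − q^{−m+i})` (an empty product, hence `1`, for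
`r = 0`). -/
noncomputable def zetaRM (q r m : ℕ) : ℝ :=
  ∏ i ∈ Finset.range r, (1 - (q : ℝ) ^ ((i : ℤ) - (m : ℤ)))

/-- `ζ_r^{d,k} = ζ_r^d ζ_r^k / (ζ_r^r q^{(d−r)(k−r)})`. -/
noncomputable def zetaRDK (q r d k : ℕ) : ℝ :=
  zetaRM q r d * zetaRM q r k / (zetaRM q r r * (q : ℝ) ^ ((d - r) * (k - r)))

/-!
Restriction to the column space `W` of `H` is a surjective linear map `G ↦ G|_W` from `d × M`
matrices onto `Hom(W, F^d)` with `rank (G * H) = rank (G|_W)`; its fibres are cosets of its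
kernel, so `rank (G * H)` is distributed like the rank of a uniform map `W → F^d`, i.e. of a
uniform `d × k` matrix. A map of rank `r` is an `r`-dimensional image `U` together with a
surjection onto `U`, and surjections onto `F^r` are matrices with `r` independent rows; counting
independent `r`-tuples in `F^d` through the subspace they span as well yields
`#{rank r} · ∏_{i<r} (q^r - q^i) = ∏_{i<r} (q^d - q^i) · ∏_{i<r} (q^k - q^i)`,
which is `q^{dk} ζ_r^{d,k}`.
-/

open Module LinearMap Function

lemma card_subtype_eq_card_mul_of_card_fiber {A B : Type*} [Finite A] [Finite B]
    {P : A → Prop} {Q : B → Prop} (g : A → B) (hg : ∀ a, P a ↔ Q (g a)) {c : ℕ}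
    (hc : ∀ b, Q b → Nat.card {a // g a = b} = c) :
    Nat.card {a // P a} = Nat.card {b // Q b} * c := by
  have := Fintype.ofFinite {b // Q b}
  let p : {a // P a} → {b // Q b} := fun a => ⟨g a, (hg a).1 a.2⟩
  have hfiber : ∀ b : {b // Q b}, {a // p a = b} ≃ {a // g a = b.1} := fun b =>
    (Equiv.subtypeEquivRight fun _ => Subtype.ext_iff).trans
      (Equiv.subtypeSubtypeEquivSubtype (p := P) (q := fun a => g a = b.1)
        fun h => (hg _).2 (h ▸ b.2))
  rw [← Nat.card_congr (Equiv.sigmaFiberEquiv p), Nat.card_sigma]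
  simp [Nat.card_congr (hfiber _), hc _ (Subtype.prop _), mul_comm]

lemma AddMonoidHom.card_subtype_comp_mul_card_eq {A B : Type*} [AddGroup A] [AddGroup B]
    [Finite A] {φ : A →+ B} (hφ : Surjective φ) (P : B → Prop) :
    Nat.card {a // P (φ a)} * Nat.card B = Nat.card {b // P b} * Nat.card A := by
  have : Finite B := Finite.of_surjective φ hφ
  have hfiber : ∀ b, Nat.card {a // φ a = b} = Nat.card φ.ker := fun b =>
    Nat.card_congr (φ.fiberEquivKerOfSurjective hφ b)
  have hP := card_subtype_eq_card_mul_of_card_fiber (P := fun a => P (φ a)) (Q := P)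
    φ (fun a => Iff.rfl) fun b _ => hfiber b
  have htot := card_subtype_eq_card_mul_of_card_fiber (P := fun _ => True) (Q := fun _ => True)
    φ (fun a => Iff.rfl) fun b _ => hfiber b
  rw [Nat.card_congr (Equiv.subtypeUnivEquiv fun _ => trivial),
    Nat.card_congr (Equiv.subtypeUnivEquiv fun _ => trivial)] at htot
  rw [hP, htot]
  ring

lemma prod_sub_pow_eq_mul_zetaRM {q r m : ℕ} (hq : 0 < q) (hrm : r ≤ m) :
    ((∏ i ∈ Finset.range r, (q ^ m - q ^ i) : ℕ) : ℝ)
      = (q : ℝ) ^ (r * m) * zetaRM q r m := by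
  have hq0 : (q : ℝ) ≠ 0 := by positivity
  have hfactor : ∀ i ∈ Finset.range r,
      ((q ^ m - q ^ i : ℕ) : ℝ) = (q : ℝ) ^ m * (1 - (q : ℝ) ^ ((i : ℤ) - m)) := by
    intro i hi
    have him : i ≤ m := (Finset.mem_range.1 hi).le.trans hrm
    rw [Nat.cast_sub (Nat.pow_le_pow_right hq him), mul_sub, mul_one, zpow_sub₀ hq0,
      zpow_natCast, zpow_natCast, mul_div_cancel₀ _ (pow_ne_zero _ hq0)]
    push_cast
    ring
  rw [Nat.cast_prod, Finset.prod_congr rfl hfactor, Finset.prod_mul_distrib, Finset.prod_const,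
    Finset.card_range, zetaRM, ← pow_mul, mul_comm m r]

section LinearAlgebra

variable {F : Type*} [Field F]

lemma Matrix.card_rank_eq_card_linearMap {d k r : ℕ} :
    Nat.card {A : Matrix (Fin d) (Fin k) F // A.rank = r}
      = Nat.card {f : (Fin k → F) →ₗ[F] (Fin d → F) // finrank F (range f) = r} :=
  Nat.card_congr (Equiv.subtypeEquiv Matrix.toLin'.toEquiv fun _ => Iff.rfl)

lemma Matrix.rank_mul_eq_finrank_range_domRestrict {l m n : Type*} [Fintype m] [Fintype n]
    (G : Matrix l m F) (H : Matrix m n F) :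
    (G * H).rank = finrank F (range (G.mulVecLin.domRestrict (range H.mulVecLin))) := by
  rw [Matrix.rank, Matrix.mulVecLin_mul, range_comp, range_domRestrict]

variable [Fintype F]

local notation "q" => Fintype.card F

lemma Matrix.card_rank_eq_card_rows {n : Type*} [Fintype n] {r : ℕ}
    (hr : r ≤ Fintype.card n) :
    Nat.card {A : Matrix (Fin r) n F // A.rank = r}
      = ∏ i ∈ Finset.range r, (q ^ Fintype.card n - q ^ i) := by
  have hrows : ∀ A : Matrix (Fin r) n F, A.rank = r ↔ LinearIndependent F A.row := fun A => by
    rw [linearIndependent_iff_card_eq_finrank_span, Fintype.card_fin,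
      A.rank_eq_finrank_span_row, Set.finrank, eq_comm]
  have e : {A : Matrix (Fin r) n F // A.rank = r}
      ≃ {s : Fin r → n → F // LinearIndependent F s} :=
    Equiv.subtypeEquiv Matrix.of.symm hrows
  rw [Nat.card_congr e, card_linearIndependent (by rwa [finrank_fintype_fun_eq_card]),
    finrank_fintype_fun_eq_card,
    Fin.prod_univ_eq_prod_range (fun i => q ^ Fintype.card n - q ^ i)]

section Maps

variable {V W : Type*} [AddCommGroup V] [Module F V] [AddCommGroup W] [Module F W]
variable [Finite V] [Finite W]

lemma card_surjective_linearMap (h : finrank F W ≤ finrank F V) :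
    Nat.card {g : V →ₗ[F] W // Surjective g}
      = ∏ i ∈ Finset.range (finrank F W), (q ^ finrank F V - q ^ i) := by
  let b := finBasis F V
  let c := finBasis F W
  have hsurj : ∀ g : V →ₗ[F] W, Surjective g ↔ (toMatrix b c g).rank = finrank F W := by
    intro g
    rw [Matrix.rank_eq_finrank_range_toLin _ c b, Matrix.toLin_toMatrix, ← range_eq_top,
      Submodule.eq_top_iff_finrank_eq]
  have e : {g : V →ₗ[F] W // Surjective g}
      ≃ {A : Matrix (Fin (finrank F W)) (Fin (finrank F V)) F // A.rank = finrank F W} :=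
    Equiv.subtypeEquiv (toMatrix b c).toEquiv hsurj
  rw [Nat.card_congr e, Matrix.card_rank_eq_card_rows (by simpa using h), Fintype.card_fin]

lemma card_linearMap_finrank_range_eq {r : ℕ} (hr : r ≤ finrank F V) :
    Nat.card {f : V →ₗ[F] W // finrank F (range f) = r}
      = Nat.card {U : Submodule F W // finrank F U = r}
          * ∏ i ∈ Finset.range r, (q ^ finrank F V - q ^ i) := by
  have : Finite (V →ₗ[F] W) := Module.finite_of_finite F
  refine card_subtype_eq_card_mul_of_card_fiber (P := fun f => finrank F (range f) = r)
    (Q := fun U : Submodule F W => finrank F U = r) (fun f : V →ₗ[F] W => range f)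
    (fun f => Iff.rfl) fun U hU => ?_
  have e : {f : V →ₗ[F] W // range f = U} ≃ {g : V →ₗ[F] U // Surjective g} :=
    { toFun := fun f => ⟨f.1.codRestrict U fun x => f.2.le (mem_range_self f.1 x), fun u => by
          obtain ⟨x, hx⟩ := f.2.ge u.2
          exact ⟨x, Subtype.ext hx⟩⟩
      invFun := fun g => ⟨U.subtype ∘ₗ g.1, by
          rw [range_comp, range_eq_top.2 g.2, Submodule.map_top, Submodule.range_subtype]⟩
      left_inv := fun f => rfl
      right_inv := fun g => rfl }
  rw [Nat.card_congr e, card_surjective_linearMap (by rw [hU]; exact hr), hU]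

lemma card_linearIndependent_eq_card_finrank_eq_mul (r : ℕ) :
    Nat.card {s : Fin r → W // LinearIndependent F s}
      = Nat.card {U : Submodule F W // finrank F U = r}
          * ∏ i ∈ Finset.range r, (q ^ r - q ^ i) := by
  -- `r` vectors are independent iff they span an `r`-dimensional subspace
  refine card_subtype_eq_card_mul_of_card_fiber (fun s => Submodule.span F (Set.range s))
    (fun s => by rw [linearIndependent_iff_card_eq_finrank_span, Fintype.card_fin, Set.finrank,
      eq_comm]) fun U hU => ?_
  have e : {s : Fin r → W // Submodule.span F (Set.range s) = U}
      ≃ {t : Fin r → U // LinearIndependent F t} :=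
    { toFun := fun s =>
        ⟨fun i => ⟨s.1 i, s.2.le (Submodule.subset_span (Set.mem_range_self i))⟩,
          LinearIndependent.of_comp U.subtype (show LinearIndependent F s.1 by
            rw [linearIndependent_iff_card_eq_finrank_span, Fintype.card_fin, Set.finrank, s.2,
              hU])⟩
      invFun := fun t => ⟨U.subtype ∘ t.1, by
          have htop : Submodule.span F (Set.range t.1) = ⊤ :=
            Submodule.eq_top_of_finrank_eq <| by
              rw [finrank_span_eq_card t.2, Fintype.card_fin, hU]
          rw [Set.range_comp, ← Submodule.map_span, htop,
            Submodule.map_top, Submodule.range_subtype]⟩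
      left_inv := fun s => rfl
      right_inv := fun t => rfl }
  rw [Nat.card_congr e, card_linearIndependent (by rw [hU]),
    Fin.prod_univ_eq_prod_range (fun i => q ^ finrank F U - q ^ i), hU]

end Maps

lemma Matrix.card_rank_mul_prod_eq {d k r : ℕ} (hrd : r ≤ d) (hrk : r ≤ k) :
    Nat.card {A : Matrix (Fin d) (Fin k) F // A.rank = r}
        * ∏ i ∈ Finset.range r, (q ^ r - q ^ i)
      = (∏ i ∈ Finset.range r, (q ^ d - q ^ i))
        * ∏ i ∈ Finset.range r, (q ^ k - q ^ i) := by
  have hlin := card_linearIndependent (K := F) (V := Fin d → F) (k := r) (by simpa using hrd)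
  rw [card_linearIndependent_eq_card_finrank_eq_mul, finrank_fin_fun,
    Fin.prod_univ_eq_prod_range (fun i => q ^ d - q ^ i)] at hlin
  rw [Matrix.card_rank_eq_card_linearMap, card_linearMap_finrank_range_eq (by simpa using hrk),
    finrank_fin_fun, mul_right_comm, ← hlin]

lemma Matrix.card_rank_mul_mul_eq_card_linearMap_mul {M N d r : ℕ}
    (H : Matrix (Fin M) (Fin N) F) :
    Nat.card {G : Matrix (Fin d) (Fin M) F // (G * H).rank = r} * q ^ (d * H.rank)
      = Nat.card {f : range H.mulVecLin →ₗ[F] (Fin d → F) // finrank F (range f) = r}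
          * q ^ (d * M) := by
  let W := range H.mulVecLin
  let φ : Matrix (Fin d) (Fin M) F →ₗ[F] W →ₗ[F] (Fin d → F) :=
    LinearMap.domRestrict' W ∘ₗ Matrix.toLin'.toLinearMap
  have hφ : Surjective φ := fun f => by
    obtain ⟨g, hg⟩ := f.exists_extend
    exact ⟨Matrix.toLin'.symm g, by ext x; simp [φ, ← hg]⟩
  have hcard :=
    φ.toAddMonoidHom.card_subtype_comp_mul_card_eq hφ (fun f => finrank F (range f) = r)
  have hG : Nat.card {G : Matrix (Fin d) (Fin M) F // (G * H).rank = r}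
      = Nat.card {G // finrank F (range (φ G)) = r} :=
    Nat.card_congr (Equiv.subtypeEquivRight fun G => by
      rw [Matrix.rank_mul_eq_finrank_range_domRestrict]; rfl)
  have hmat : Nat.card (Matrix (Fin d) (Fin M) F) = q ^ (d * M) := by
    rw [natCard_eq_pow_finrank (K := F), finrank_matrix, Nat.card_eq_fintype_card]
    simp
  have hhom : Nat.card (W →ₗ[F] (Fin d → F)) = q ^ (d * H.rank) := by
    rw [natCard_eq_pow_finrank (K := F), finrank_linearMap, Nat.card_eq_fintype_card,
      finrank_fin_fun, mul_comm]
    rfl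
  rw [hG, ← hhom, ← hmat]
  exact hcard

lemma Matrix.card_rank_mul_mul_eq {M N d r : ℕ} (H : Matrix (Fin M) (Fin N) F)
    (hr : r ≤ H.rank) :
    Nat.card {G : Matrix (Fin d) (Fin M) F // (G * H).rank = r} * q ^ (d * H.rank)
      = Nat.card {A : Matrix (Fin d) (Fin H.rank) F // A.rank = r} * q ^ (d * M) := by
  rw [Matrix.card_rank_mul_mul_eq_card_linearMap_mul, Matrix.card_rank_eq_card_linearMap,
    card_linearMap_finrank_range_eq hr, card_linearMap_finrank_range_eq (by simpa using hr),
    finrank_fin_fun]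
  rfl

lemma Matrix.card_rank_div_eq_zetaRDK {d k r : ℕ} (hrd : r ≤ d) (hrk : r ≤ k) :
    (Nat.card {A : Matrix (Fin d) (Fin k) F // A.rank = r} : ℝ) / (q : ℝ) ^ (d * k)
      = zetaRDK q r d k := by
  have hq : 0 < q := Fintype.card_pos
  have hq0 : (q : ℝ) ≠ 0 := by positivity
  have hcount := congrArg (Nat.cast (R := ℝ)) (Matrix.card_rank_mul_prod_eq (F := F) hrd hrk)
  rw [Nat.cast_mul, Nat.cast_mul, prod_sub_pow_eq_mul_zetaRM hq le_rfl,
    prod_sub_pow_eq_mul_zetaRM hq hrd, prod_sub_pow_eq_mul_zetaRM hq hrk] at hcount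
  have hζ : zetaRM q r r ≠ 0 := by
    have hpos : 0 < ∏ i ∈ Finset.range r, (q ^ r - q ^ i) := Finset.prod_pos fun i hi =>
      Nat.sub_pos_of_lt (Nat.pow_lt_pow_right Fintype.one_lt_card (Finset.mem_range.1 hi))
    have := prod_sub_pow_eq_mul_zetaRM hq le_rfl ▸ (Nat.cast_pos (α := ℝ)).2 hpos
    exact right_ne_zero_of_mul this.ne'
  obtain ⟨d, rfl⟩ := Nat.exists_eq_add_of_le hrd
  obtain ⟨k, rfl⟩ := Nat.exists_eq_add_of_le hrk
  rw [zetaRDK, Nat.add_sub_cancel_left, Nat.add_sub_cancel_left,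
    div_eq_div_iff (pow_ne_zero _ hq0) (mul_ne_zero hζ (pow_ne_zero _ hq0))]
  apply mul_left_cancel₀ (pow_ne_zero (r * r) hq0)
  linear_combination (q : ℝ) ^ (d * k) * hcount

end LinearAlgebra

/-- Let `H` be a fixed `M×N` matrix over a finite field `F` with `q` elements,
with `rank H = k`. For every `r ≤ min{d,k}`, the number of `d×M` matrices `G`
over `F` with `rank(G·H) = r` equals `q^{dM} · ζ_r^{d,k}`; equivalently, for a
uniformly random `G`, `Pr{rank(G·H) = r} = ζ_r^{d,k}` — the same as the rank
distribution of a uniformly random `d×k` matrix over `F`. -/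
theorem card_G_rank_GH (F : Type*) [Field F] [Fintype F]
    (q : ℕ) (hq : q = Fintype.card F)
    (M N d k : ℕ) (H : Matrix (Fin M) (Fin N) F) (hH : H.rank = k)
    (r : ℕ) (hrd : r ≤ d) (hrk : r ≤ k) :
    (Nat.card {G : Matrix (Fin d) (Fin M) F // (G * H).rank = r} : ℝ)
        = (q : ℝ) ^ (d * M) * zetaRDK q r d k ∧
    (Nat.card {G : Matrix (Fin d) (Fin M) F // (G * H).rank = r} : ℝ)
          / (q : ℝ) ^ (d * M)
        = zetaRDK q r d k ∧
    (Nat.card {G : Matrix (Fin d) (Fin M) F // (G * H).rank = r} : ℝ)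
          / (q : ℝ) ^ (d * M)
        = (Nat.card {A : Matrix (Fin d) (Fin k) F // A.rank = r} : ℝ)
            / (q : ℝ) ^ (d * k) := by
  subst hq hH
  have hq0 : (Fintype.card F : ℝ) ≠ 0 := Nat.cast_ne_zero.2 Fintype.card_ne_zero
  have hratio : (Nat.card {G : Matrix (Fin d) (Fin M) F // (G * H).rank = r} : ℝ)
        / (Fintype.card F : ℝ) ^ (d * M)
      = (Nat.card {A : Matrix (Fin d) (Fin H.rank) F // A.rank = r} : ℝ)
        / (Fintype.card F : ℝ) ^ (d * H.rank) := by
    rw [div_eq_div_iff (pow_ne_zero _ hq0) (pow_ne_zero _ hq0)]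
    exact_mod_cast Matrix.card_rank_mul_mul_eq H hrk
  have hprob := hratio.trans (Matrix.card_rank_div_eq_zetaRDK hrd hrk)
  refine ⟨?_, hprob, hratio⟩
  rw [← hprob, mul_div_cancel₀ _ (pow_ne_zero _ hq0)]
end

section
/- Let F be a finite field with q elements, let d ≥ 1 and M, N ≥ 0 be integers, let v ∈ F^d be a nonzero row vector, and let H be an M×N matrix over F with rank(H) = k. Then the number of d×M matrices G over F such that v·G·H is the zero row vector equals q^{dM−k}; equivalently, for a uniformly random d×M matrix G over F, Pr{v·G·H = 0} = q^{−k}. -/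
/-!
Since `v ≠ 0`, every row vector is `v ᵥ* G` for some `G`, so the linear map
`G ↦ v ᵥ* G ᵥ* H` has the same image as `x ↦ x ᵥ* H`, namely the row space of `H`, of
dimension `rank H`. By rank–nullity its kernel has dimension `dM - rank H`, and a subspace
of dimension `r` over `F` has `q ^ r` elements.
-/

open Module LinearMap

namespace Matrix

variable {F m n o : Type*} [Field F] [Fintype m] [Fintype o]

theorem vecMulBilin_surjective {v : m → F} (hv : v ≠ 0) :
    Function.Surjective (vecMulBilin F F v : Matrix m n F →ₗ[F] n → F) := by
  classical
  obtain ⟨i, hi⟩ : ∃ i, v i ≠ 0 := Function.ne_iff.mp hv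
  refine fun w => ⟨vecMulVec (Pi.single i (v i)⁻¹) w, ?_⟩
  rw [vecMulBilin_apply, vecMul_vecMulVec, dotProduct_single, mul_inv_cancel₀ hi, one_smul]

theorem finrank_range_vecMulLinear [Fintype n] (H : Matrix n o F) :
    finrank F (range H.vecMulLinear) = H.rank := by
  rw [range_vecMulLinear, rank_eq_finrank_span_row]

theorem finrank_ker_vecMul_mul_add_rank [Fintype n] {v : m → F} (hv : v ≠ 0)
    (H : Matrix n o F) :
    finrank F (ker (H.vecMulLinear ∘ₗ vecMulBilin F F v)) + H.rank
      = Fintype.card m * Fintype.card n := by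
  rw [← finrank_range_vecMulLinear, ← Submodule.map_top, ← range_eq_top.mpr
    (vecMulBilin_surjective hv), ← range_comp, add_comm, finrank_range_add_finrank_ker,
    finrank_matrix, finrank_self, mul_one]

theorem natCard_vecMul_mul_eq_zero [Fintype n] {v : m → F} (hv : v ≠ 0) (H : Matrix n o F) :
    Nat.card {G : Matrix m n F // v ᵥ* (G * H) = 0}
      = Nat.card F ^ (Fintype.card m * Fintype.card n - H.rank) := by
  have hker : Nat.card {G : Matrix m n F // v ᵥ* (G * H) = 0}
      = Nat.card (ker (H.vecMulLinear ∘ₗ vecMulBilin F F v)) :=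
    Nat.card_congr <| Equiv.subtypeEquivRight fun G => by simp [vecMul_vecMul]
  rw [hker, natCard_eq_pow_finrank (K := F), ← finrank_ker_vecMul_mul_add_rank hv H,
    Nat.add_sub_cancel]

end Matrix

theorem card_G_vGH_eq_zero_general (F : Type*) [Field F] [Fintype F]
    (q : ℕ) (hq : q = Fintype.card F)
    (d M N : ℕ)
    (v : Fin d → F) (hv : v ≠ 0)
    (k : ℕ) (H : Matrix (Fin M) (Fin N) F) (hH : H.rank = k) :
    Nat.card {G : Matrix (Fin d) (Fin M) F // Matrix.vecMul v (G * H) = 0}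
        = q ^ (d * M - k) ∧
    (Nat.card {G : Matrix (Fin d) (Fin M) F // Matrix.vecMul v (G * H) = 0} : ℝ)
          / (q : ℝ) ^ (d * M)
        = (q : ℝ) ^ (-(k : ℤ)) := by
  have hcard := Matrix.natCard_vecMul_mul_eq_zero hv H
  have hk := Matrix.finrank_ker_vecMul_mul_add_rank hv H
  rw [Nat.card_eq_fintype_card (α := F), ← hq, hH] at hcard
  simp only [hH, Fintype.card_fin] at hcard hk
  have hq0 : (q : ℝ) ≠ 0 := by
    rw [hq, Nat.cast_ne_zero]
    exact Fintype.card_ne_zero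
  refine ⟨hcard, ?_⟩
  rw [hcard, Nat.cast_pow, pow_sub₀ _ hq0 (by omega),
    mul_div_cancel_left₀ _ (pow_ne_zero _ hq0), zpow_neg, zpow_natCast]

/-- Let `F` be a finite field with `q` elements, `v ∈ F^d` a nonzero row
vector, and `H` an `M×N` matrix over `F` with `rank H = k`. Then the number of
`d×M` matrices `G` over `F` such that `v·G·H` is the zero row vector equals
`q^{dM−k}`; equivalently, for a uniformly random `d×M` matrix `G`,
`Pr{v·G·H = 0} = q^{−k}`. -/
theorem card_G_vGH_eq_zero (F : Type*) [Field F] [Fintype F]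
    (q : ℕ) (hq : q = Fintype.card F)
    (d M N : ℕ) (hd : 1 ≤ d)
    (v : Fin d → F) (hv : v ≠ 0)
    (k : ℕ) (H : Matrix (Fin M) (Fin N) F) (hH : H.rank = k) :
    Nat.card {G : Matrix (Fin d) (Fin M) F // Matrix.vecMul v (G * H) = 0}
        = q ^ (d * M - k) ∧
    (Nat.card {G : Matrix (Fin d) (Fin M) F // Matrix.vecMul v (G * H) = 0} : ℝ)
          / (q : ℝ) ^ (d * M)
        = (q : ℝ) ^ (-(k : ℤ)) :=
  card_G_vGH_eq_zero_general F q hq d M N v hv k H hH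
end

section
/- Fix integers v ≥ 1, l ≥ 1, t ≥ 0, and r ≥ 2, and consider t·r check sockets grouped into t check nodes with r sockets each. The number of injective maps f from a set of v·l labeled variable-node sockets into the set of t·r check sockets such that every one of the t check nodes contains at least two sockets in the image of f equals (v·l)! · coef{((1+x)^r − 1 − r·x)^t, x^{v·l}}. -/
/-!
An injective `f` is its image `A` (an `n`-element set of sockets meeting every check node at
least twice, `n = v·l`) together with a bijection from the variable sockets onto `A`, so each
admissible image accounts for `n!` maps. Cutting `A` along the check nodes identifies it with a
`t`-tuple of subsets of `Fin r`, each of size at least two, of total size `n`; and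
`(1 + x)^r - 1 - r x = ∑_{|s| ≥ 2} x^{|s|}` is the generating function of one such subset, so
its `t`-th power counts the tuples by total size.
-/

open Polynomial Finset Function
open scoped Nat

section InjectiveCount

variable {α β : Type*} [Fintype α] [DecidableEq α] [Fintype β] [DecidableEq β]

theorem card_injective_image_eq (A : Finset β) (hA : #A = Fintype.card α) :
    #{f : α → β | Injective f ∧ univ.image f = A} = (Fintype.card α)! := by
  have e : α ≃ A := Fintype.equivOfCardEq (by simpa using hA.symm)
  rw [← Fintype.card_subtype, ← Fintype.card_equiv e]
  refine Fintype.card_congr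
    { toFun := fun f => Equiv.ofBijective
        (fun a => ⟨f.1 a, by simpa only [f.2.2] using mem_image_of_mem f.1 (mem_univ a)⟩)
        ⟨fun a b h => f.2.1 (congrArg Subtype.val h), fun b => ?_⟩
      invFun := fun e => ⟨fun a => e a, fun a b h => e.injective (Subtype.ext h), ?_⟩
      left_inv := fun f => rfl
      right_inv := fun e => Equiv.ext fun a => rfl }
  · obtain ⟨a, -, ha⟩ := mem_image.1 (f.2.2.symm ▸ b.2 : (b : β) ∈ univ.image f.1)
    exact ⟨a, Subtype.ext ha⟩
  · ext b
    simp only [mem_image, mem_univ, true_and]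
    exact ⟨fun ⟨a, ha⟩ => ha ▸ (e a).2, fun hb => ⟨e.symm ⟨b, hb⟩, by simp⟩⟩

theorem card_injective_filter_image (P : Finset β → Prop) [DecidablePred P] :
    #{f : α → β | Injective f ∧ P (univ.image f)}
      = (Fintype.card α)! * #{A : Finset β | #A = Fintype.card α ∧ P A} := by
  have hmaps : ∀ f ∈ ({f : α → β | Injective f ∧ P (univ.image f)} : Finset _),
      univ.image f ∈ ({A : Finset β | #A = Fintype.card α ∧ P A} : Finset _) := by
    intro f hf
    simp only [mem_filter, mem_univ, true_and] at hf ⊢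
    exact ⟨by rw [card_image_of_injective _ hf.1, card_univ], hf.2⟩
  rw [card_eq_sum_card_fiberwise hmaps, mul_comm, ← smul_eq_mul, ← sum_const]
  refine sum_congr rfl fun A hA => ?_
  simp only [mem_filter, mem_univ, true_and] at hA
  rw [filter_filter, ← card_injective_image_eq A hA.1]
  congr 1
  ext f
  simp only [mem_filter, mem_univ, true_and]
  constructor
  · rintro ⟨⟨hf, -⟩, rfl⟩; exact ⟨hf, rfl⟩
  · rintro ⟨hf, rfl⟩; exact ⟨⟨hf, hA.2⟩, rfl⟩

end InjectiveCount

section Curry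

variable {ι κ : Type*} [Fintype ι] [DecidableEq ι] [Fintype κ] [DecidableEq κ]

def finsetProdEquivPi : Finset (ι × κ) ≃ (ι → Finset κ) where
  toFun A i := {k | (i, k) ∈ A}
  invFun g := {x | x.2 ∈ g x.1}
  left_inv A := by ext; simp
  right_inv g := by ext; simp

@[simp]
theorem mem_finsetProdEquivPi {A : Finset (ι × κ)} {i : ι} {k : κ} :
    k ∈ finsetProdEquivPi A i ↔ (i, k) ∈ A := by
  simp [finsetProdEquivPi]

theorem card_filter_fst_eq_card_finsetProdEquivPi (A : Finset (ι × κ)) (i : ι) :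
    #{x ∈ A | x.1 = i} = #(finsetProdEquivPi A i) := by
  rw [← card_map (Embedding.sectR i κ)]
  congr 1
  ext ⟨j, k⟩
  simp only [mem_filter, mem_map, mem_finsetProdEquivPi, Embedding.sectR_apply, Prod.mk.injEq]
  aesop

theorem card_eq_sum_card_finsetProdEquivPi (A : Finset (ι × κ)) :
    #A = ∑ i, #(finsetProdEquivPi A i) := by
  simp only [← card_filter_fst_eq_card_finsetProdEquivPi]
  exact card_eq_sum_card_fiberwise fun x _ => mem_univ x.1

end Curry

theorem coeff_prod_sum_X_pow {R ι β : Type*} [CommSemiring R] [Fintype ι] [DecidableEq ι]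
    (S : ι → Finset β) (w : β → ℕ) (n : ℕ) :
    (∏ i, ∑ b ∈ S i, (X : R[X]) ^ w b).coeff n
      = #{g ∈ Fintype.piFinset S | ∑ i, w (g i) = n} := by
  simp only [prod_univ_sum, prod_pow_eq_pow_sum, finsetSum_coeff, coeff_X_pow, eq_comm (a := n)]
  exact sum_boole _ _

theorem sum_X_pow_card_of_two_le {R : Type*} [CommRing R] (κ : Type*) [Fintype κ] :
    ∑ s : Finset κ with 2 ≤ #s, (X : R[X]) ^ #s
      = (1 + X) ^ Fintype.card κ - 1 - C (Fintype.card κ : R) * X := by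
  ext k
  simp only [finsetSum_coeff, coeff_X_pow, sum_boole, coeff_sub, coeff_one_add_X_pow, coeff_one,
    coeff_C_mul, coeff_X, filter_filter]
  by_cases hk : 2 ≤ k
  · have hchoose : #{s : Finset κ | k = #s} = (Fintype.card κ).choose k := by
      rw [← card_univ, ← card_powersetCard]
      congr 1
      ext s
      simp [eq_comm]
    rw [filter_congr fun s _ => and_iff_right_of_imp fun h => h ▸ hk, hchoose]
    simp [show k ≠ 0 by omega, show 1 ≠ k by omega]
  · rw [filter_false_of_mem fun s _ ⟨h2, hs⟩ => hk (hs ▸ h2)]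
    interval_cases k <;> simp

theorem coeff_pow_sum_X_pow_card_of_two_le {R : Type*} [CommRing R] (ι κ : Type*) [Fintype ι]
    [DecidableEq ι] [Fintype κ] (n : ℕ) :
    (((1 + X : R[X]) ^ Fintype.card κ - 1 - C (Fintype.card κ : R) * X) ^ Fintype.card ι).coeff n
      = (#{g ∈ Fintype.piFinset fun _ : ι => {s : Finset κ | 2 ≤ #s} | ∑ i, #(g i) = n} : R) := by
  rw [← sum_X_pow_card_of_two_le, ← card_univ, ← prod_const, coeff_prod_sum_X_pow]

theorem card_injective_two_le_card_fiber {α ι κ : Type*} [Fintype α] [DecidableEq α] [Fintype ι]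
    [DecidableEq ι] [Fintype κ] [DecidableEq κ] :
    Nat.card {f : α → ι × κ // Injective f ∧ ∀ i, 2 ≤ #{a | (f a).1 = i}}
      = (Fintype.card α)! *
          #{g ∈ Fintype.piFinset fun _ : ι => {s : Finset κ | 2 ≤ #s} |
            ∑ i, #(g i) = Fintype.card α} := by
  have hfiber : ∀ f : α → ι × κ, Injective f → ∀ i,
      #{a | (f a).1 = i} = #{x ∈ univ.image f | x.1 = i} := fun f hf i => by
    rw [filter_image, card_image_of_injective _ hf]
  rw [Nat.card_eq_fintype_card, Fintype.card_subtype,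
    filter_congr fun f _ => and_congr_right fun hf => forall_congr' fun i => by rw [hfiber f hf],
    card_injective_filter_image (P := fun A : Finset (ι × κ) => ∀ i, 2 ≤ #{x ∈ A | x.1 = i})]
  congr 1
  refine card_equiv finsetProdEquivPi fun A => ?_
  simp only [mem_filter, mem_univ, true_and, Fintype.mem_piFinset,
    card_filter_fst_eq_card_finsetProdEquivPi, ← card_eq_sum_card_finsetProdEquivPi, and_comm]

theorem card_constellations_general (v l t r : ℕ) :
    (Nat.card {f : Fin (v * l) → Fin t × Fin r //
        Function.Injective f ∧
        ∀ c : Fin t, 2 ≤ (Finset.univ.filter (fun s => (f s).1 = c)).card} : ℤ)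
      = (Nat.factorial (v * l) : ℤ) *
          ((((1 + X : Polynomial ℤ) ^ r - 1 - C (r : ℤ) * X) ^ t).coeff (v * l)) := by
  have hcoeff := coeff_pow_sum_X_pow_card_of_two_le (R := ℤ) (Fin t) (Fin r) (v * l)
  simp only [Fintype.card_fin] at hcoeff
  rw [card_injective_two_le_card_fiber, hcoeff, Fintype.card_fin, Nat.cast_mul]

/-- Consider `t·r` check sockets grouped into `t` check nodes with `r`
sockets each (a check socket is a pair `(c, p) : Fin t × Fin r`). The number
of injective maps `f` from a set of `v·l` labeled variable-node sockets into
the set of check sockets such that every one of the `t` check nodes contains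
at least two sockets in the image of `f` equals
`(v·l)! · coef{((1+x)^r − 1 − r·x)^t, x^{v·l}}`. -/
theorem card_constellations (v l t r : ℕ) (hv : 1 ≤ v) (hl : 1 ≤ l)
    (hr : 2 ≤ r) :
    (Nat.card {f : Fin (v * l) → Fin t × Fin r //
        Function.Injective f ∧
        ∀ c : Fin t, 2 ≤ (Finset.univ.filter (fun s => (f s).1 = c)).card} : ℤ)
      = (Nat.factorial (v * l) : ℤ) *
          ((((1 + X : Polynomial ℤ) ^ r - 1 - C (r : ℤ) * X) ^ t).coeff (v * l)) :=
  card_constellations_general v l t r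
end
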